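/- arXiv:2602.09922 — 8 statements merged into one kernel-verified Lean document; each statement's English description precedes it below -/
import Mathlib

section
/- Let I be a separable metrisable space, E a Hausdorff topological space, μ an inner regular Borel measure on I with full support (supp μ = I), and φ : I × I → ℝ continuous in the first variable with I_φ defined as the set of t such that every ball around t contains a point s with φ(s,t) > 0. Let X, X̃ : I × Ω → E be processes on a probability space such that X_t = X̃_t almost surely for μ-almost every t ∈ I. Suppose (i) all paths of X and X̃ are sequentially continuous with respect to φ (i.e., if t_n → t with φ(t_n, t) > 0 for all n, then X_{t_n}(ω) → X_t(ω)), and (ii) there is a countable set J_φ ⊆ I_φᶜ such that X_t = X̃_t a.s. for all t ∈ J_φ and the paths of X and X̃ are sequentially continuous at every point of I_φᶜ \ J_φ. Then X and X̃ are indistinguishable: there is a null set N such that X_t(ω) = X̃_t(ω) for all t ∈ I and ω ∉ N. -/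
/-!
The set `A` of times at which `X_t = X'_t` almost surely is `μ`-conull, hence dense because `μ`
charges every nonempty open set; in a separable metric space it contains a countable dense subset
`D`. Off the null set where `X` and `X'` differ at some point of `D ∪ J_φ`, the paths agree on `D`.
A time `t ∈ I_φ` lies in the closure of the open set `{s | φ (s, t) > 0}`, so it is the limit of a
sequence from `D` along which `φ` stays positive; any other `t ∉ J_φ` is a limit of points of `D`.
Passing to the limit in the Hausdorff space `E` identifies the two paths at `t`.
-/

open MeasureTheory Filter Topology

theorem eq_of_eqOn_dense_of_tendsto_seq {α E : Type*} [TopologicalSpace α]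
    [FrechetUrysohnSpace α] [TopologicalSpace E] [T2Space E] {f g : α → E} {D U : Set α}
    (hD : Dense D) (hfg : Set.EqOn f g D) (hU : IsOpen U) {t : α} (ht : t ∈ closure U)
    (hcont : ∀ u : ℕ → α, Tendsto u atTop (𝓝 t) → (∀ n, u n ∈ U) →
      Tendsto (fun n => f (u n)) atTop (𝓝 (f t)) ∧ Tendsto (fun n => g (u n)) atTop (𝓝 (g t))) :
    f t = g t := by
  have htUD : t ∈ closure (U ∩ D) :=
    closure_minimal (hD.open_subset_closure_inter hU) isClosed_closure ht
  obtain ⟨u, huUD, hut⟩ := mem_closure_iff_seq_limit.mp htUD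
  obtain ⟨hf, hg⟩ := hcont u hut fun n => (huUD n).1
  refine tendsto_nhds_unique ?_ hg
  simpa only [fun n => hfg (huUD n).2] using hf

theorem mem_closure_setOf_pos_of_forall_ball {I : Type*} [PseudoMetricSpace I] {φ : I × I → ℝ}
    {t : I} (ht : ∀ δ : ℝ, 0 < δ → ∃ s ∈ Metric.ball t δ, 0 < φ (s, t)) :
    t ∈ closure {s | 0 < φ (s, t)} :=
  Metric.mem_closure_iff.mpr fun δ hδ => by
    obtain ⟨s, hs, hφs⟩ := ht δ hδ
    exact ⟨s, hφs, by rwa [dist_comm, ← Metric.mem_ball]⟩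

theorem exists_countable_dense_subset_of_ae {I : Type*} [MetricSpace I]
    [TopologicalSpace.SeparableSpace I] [MeasurableSpace I] {μ : Measure I}
    (hsupp : ∀ U : Set I, IsOpen U → U.Nonempty → 0 < μ U) {p : I → Prop}
    (hp : ∀ᵐ t ∂μ, p t) : ∃ D ⊆ {t | p t}, D.Countable ∧ Dense D := by
  have : μ.IsOpenPosMeasure := ⟨fun U hU hne => (hsupp U hU hne).ne'⟩
  exact (Measure.dense_of_ae hp).exists_countable_dense_subset

theorem measure_setOf_exists_ne_eq_zero {T Ω E : Type*} [MeasurableSpace Ω] {P : Measure Ω}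
    {X X' : T → Ω → E} {S : Set T} (hS : S.Countable) (heq : ∀ t ∈ S, ∀ᵐ ω ∂P, X t ω = X' t ω) :
    P {ω | ∃ t ∈ S, X t ω ≠ X' t ω} = 0 := by
  have hunion : {ω | ∃ t ∈ S, X t ω ≠ X' t ω} = ⋃ t ∈ S, {ω | X t ω ≠ X' t ω} := by
    ext; simp only [Set.mem_ofPred_eq, Set.mem_iUnion, exists_prop]
  rw [hunion, measure_biUnion_null_iff hS]
  exact fun t ht => ae_iff.mp (heq t ht)

theorem stmt3_general {I : Type*} [MetricSpace I] [TopologicalSpace.SeparableSpace I]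
    [MeasurableSpace I]
    {E : Type*} [TopologicalSpace E] [T2Space E]
    {Ω : Type*} [MeasurableSpace Ω] (P : Measure Ω)
    (μ : Measure I)
    (hsupp : ∀ U : Set I, IsOpen U → U.Nonempty → 0 < μ U)
    (φ : I × I → ℝ) (hφ : ∀ t : I, Continuous fun s => φ (s, t))
    (X X' : I → Ω → E)
    (hweak : ∀ᵐ t ∂μ, ∀ᵐ ω ∂P, X t ω = X' t ω)
    (Iphi : Set I)
    (hIphi : Iphi = {t : I | ∀ δ : ℝ, 0 < δ → ∃ s ∈ Metric.ball t δ, 0 < φ (s, t)})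
    -- (i) all paths of `X` and `X'` are sequentially continuous with respect to `φ`
    (hseq : ∀ (ω : Ω) (t : I) (u : ℕ → I), Tendsto u atTop (nhds t) →
      (∀ n, 0 < φ (u n, t)) →
      Tendsto (fun n => X (u n) ω) atTop (nhds (X t ω)) ∧
      Tendsto (fun n => X' (u n) ω) atTop (nhds (X' t ω)))
    -- (ii) countable set `J_φ ⊆ I_φᶜ` with a.s. equality on it and sequential
    -- continuity of the paths on `I_φᶜ \ J_φ`
    (Jphi : Set I) (hJc : Jphi.Countable)
    (hJeq : ∀ t ∈ Jphi, ∀ᵐ ω ∂P, X t ω = X' t ω)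
    (hseq2 : ∀ (ω : Ω), ∀ t ∈ Iphiᶜ \ Jphi, ∀ u : ℕ → I, Tendsto u atTop (nhds t) →
      Tendsto (fun n => X (u n) ω) atTop (nhds (X t ω)) ∧
      Tendsto (fun n => X' (u n) ω) atTop (nhds (X' t ω))) :
    ∃ N : Set Ω, P N = 0 ∧ ∀ ω ∉ N, ∀ t, X t ω = X' t ω := by
  obtain ⟨D, hDA, hDc, hDd⟩ := exists_countable_dense_subset_of_ae hsupp hweak
  refine ⟨{ω | ∃ t ∈ D ∪ Jphi, X t ω ≠ X' t ω},
    measure_setOf_exists_ne_eq_zero (hDc.union hJc) fun t ht => ht.elim (hDA ·) (hJeq t), ?_⟩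
  intro ω hω t
  have hagree : ∀ s ∈ D ∪ Jphi, X s ω = X' s ω := fun s hs => by
    by_contra hne
    exact hω ⟨s, hs, hne⟩
  have hDeq : Set.EqOn (X · ω) (X' · ω) D := fun s hs => hagree s (.inl hs)
  by_cases htI : t ∈ Iphi
  · rw [hIphi] at htI
    exact eq_of_eqOn_dense_of_tendsto_seq hDd hDeq (isOpen_lt continuous_const (hφ t))
      (mem_closure_setOf_pos_of_forall_ball htI) (hseq ω t)
  by_cases htJ : t ∈ Jphi
  · exact hagree t (.inr htJ)
  · exact eq_of_eqOn_dense_of_tendsto_seq hDd hDeq isOpen_univ (subset_closure trivial)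
      fun u hut _ => hseq2 ω t ⟨htI, htJ⟩ u hut

/-- Two weakly modified processes with sequentially `φ`-continuous paths (plus the
countable exceptional-set condition on `I_φᶜ`) are indistinguishable, provided the
underlying measure on the separable metrisable index space is inner regular and has
full support. -/
theorem stmt3 {I : Type*} [MetricSpace I] [TopologicalSpace.SeparableSpace I]
    [MeasurableSpace I] [BorelSpace I]
    {E : Type*} [TopologicalSpace E] [T2Space E] [MeasurableSpace E] [BorelSpace E]
    {Ω : Type*} [MeasurableSpace Ω] (P : Measure Ω) [IsProbabilityMeasure P]
    (μ : Measure I) (hreg : μ.InnerRegular)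
    (hsupp : ∀ U : Set I, IsOpen U → U.Nonempty → 0 < μ U)
    (φ : I × I → ℝ) (hφ : ∀ t : I, Continuous fun s => φ (s, t))
    (X X' : I → Ω → E)
    (hXm : ∀ t, Measurable (X t)) (hX'm : ∀ t, Measurable (X' t))
    (hweak : ∀ᵐ t ∂μ, ∀ᵐ ω ∂P, X t ω = X' t ω)
    (Iphi : Set I)
    (hIphi : Iphi = {t : I | ∀ δ : ℝ, 0 < δ → ∃ s ∈ Metric.ball t δ, 0 < φ (s, t)})
    -- (i) all paths of `X` and `X'` are sequentially continuous with respect to `φ`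
    (hseq : ∀ (ω : Ω) (t : I) (u : ℕ → I), Tendsto u atTop (nhds t) →
      (∀ n, 0 < φ (u n, t)) →
      Tendsto (fun n => X (u n) ω) atTop (nhds (X t ω)) ∧
      Tendsto (fun n => X' (u n) ω) atTop (nhds (X' t ω)))
    -- (ii) countable set `J_φ ⊆ I_φᶜ` with a.s. equality on it and sequential
    -- continuity of the paths on `I_φᶜ \ J_φ`
    (Jphi : Set I) (hJsub : Jphi ⊆ Iphiᶜ) (hJc : Jphi.Countable)
    (hJeq : ∀ t ∈ Jphi, ∀ᵐ ω ∂P, X t ω = X' t ω)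
    (hseq2 : ∀ (ω : Ω), ∀ t ∈ Iphiᶜ \ Jphi, ∀ u : ℕ → I, Tendsto u atTop (nhds t) →
      Tendsto (fun n => X (u n) ω) atTop (nhds (X t ω)) ∧
      Tendsto (fun n => X' (u n) ω) atTop (nhds (X' t ω))) :
    ∃ N : Set Ω, P N = 0 ∧ ∀ ω ∉ N, ∀ t, X t ω = X' t ω :=
  stmt3_general P μ hsupp φ hφ X X' hweak Iphi hIphi hseq Jphi hJc hJeq hseq2
end

section
/- Let E be a separable metrisable space with metric d, which is a star-convex subset of a real vector space with center x₀ ∈ E, such that d((1-λ)x₀ + λx, y) ≤ (1-λ)d(x₀,y) + λd(x,y) for all λ ∈ [0,1] and x,y ∈ E. Then there exists a sequence (φ_n) of Borel measurable maps φ_n : E → E, each taking finitely many values, such that d(φ_k(x), x₀) ≤ d(x, x₀), d(φ_{k+1}(x), x) ≤ d(φ_k(x), x), and φ_n(x) → x as n → ∞, for all k ∈ ℕ and x ∈ E. -/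
/-!
Enumerate a countable dense subset of `E` together with `x₀` as `w₀, w₁, …` and let `φₙ(x)` be
a best approximation of `x` among `x₀, w₀, …, wₙ₋₁`, restricted to points no farther from `x₀`
than `x` and updated greedily. Everything except convergence is then immediate; for convergence
one needs, for every `ε > 0`, a point of the sequence within `ε` of `x` and no farther from `x₀`
than `x`. The convexity inequality gives such points on the segment `[x₀, x]`: the point at
parameter `1 - s / d(x₀, x)` is within `s` of `x` and at distance at most `d(x₀, x) - s` from `x₀`,
so any point of the dense set within `s` of it does the job.
-/

open Set Filter Topology

section Greedy

variable {V : Type*} {d : V → V → ℝ} {x₀ : V} {w : ℕ → V}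

noncomputable def greedyApprox (d : V → V → ℝ) (x₀ : V) (w : ℕ → V) : ℕ → V → V
  | 0, _ => x₀
  | n + 1, x =>
    if d x₀ (w n) ≤ d x₀ x ∧ d (w n) x < d (greedyApprox d x₀ w n x) x then w n
    else greedyApprox d x₀ w n x

theorem greedyApprox_mem_insert_image (n : ℕ) (x : V) :
    greedyApprox d x₀ w n x ∈ insert x₀ (w '' Iio n) := by
  induction n with
  | zero => exact mem_insert _ _
  | succ n ih =>
    rw [greedyApprox]
    split_ifs
    · exact mem_insert_of_mem _ ⟨n, Nat.lt_succ_self n, rfl⟩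
    · exact insert_subset_insert (image_mono (Iio_subset_Iio n.le_succ)) ih

theorem greedyApprox_image_finite (n : ℕ) (s : Set V) : (greedyApprox d x₀ w n '' s).Finite :=
  ((finite_Iio n).image w).insert x₀ |>.subset <| image_subset_iff.2 fun x _ ↦
    greedyApprox_mem_insert_image n x

theorem greedyApprox_mem {s : Set V} (hx₀ : x₀ ∈ s) (hw : ∀ n, w n ∈ s) (n : ℕ) (x : V) :
    greedyApprox d x₀ w n x ∈ s :=
  insert_subset hx₀ (image_subset_iff.2 fun i _ ↦ hw i) (greedyApprox_mem_insert_image n x)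

theorem greedyApprox_succ_le (n : ℕ) (x : V) :
    d (greedyApprox d x₀ w (n + 1) x) x ≤ d (greedyApprox d x₀ w n x) x := by
  rw [greedyApprox]
  split_ifs with h
  exacts [h.2.le, le_rfl]

theorem greedyApprox_succ_le_of_le {n : ℕ} {x : V} (h : d x₀ (w n) ≤ d x₀ x) :
    d (greedyApprox d x₀ w (n + 1) x) x ≤ d (w n) x := by
  rw [greedyApprox]
  split_ifs with h'
  · exact le_rfl
  · exact not_lt.1 fun hlt ↦ h' ⟨h, hlt⟩

theorem dist_center_greedyApprox_le {x : V} (hx : d x₀ x₀ ≤ d x₀ x) (n : ℕ) :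
    d x₀ (greedyApprox d x₀ w n x) ≤ d x₀ x := by
  induction n with
  | zero => exact hx
  | succ n ih =>
    rw [greedyApprox]
    split_ifs with h
    exacts [h.1, ih]

theorem tendsto_dist_greedyApprox {x : V} (hnonneg : ∀ n, 0 ≤ d (greedyApprox d x₀ w n x) x)
    (hw : ∀ ε > 0, ∃ n, d x₀ (w n) ≤ d x₀ x ∧ d (w n) x < ε) :
    Tendsto (fun n ↦ d (greedyApprox d x₀ w n x) x) atTop (𝓝 0) := by
  have hanti : Antitone fun n ↦ d (greedyApprox d x₀ w n x) x :=
    antitone_nat_of_succ_le fun n ↦ greedyApprox_succ_le n x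
  refine tendsto_order.2 ⟨fun a ha ↦ .of_forall fun n ↦ ha.trans_le (hnonneg n), fun ε hε ↦ ?_⟩
  obtain ⟨n, hcenter, hclose⟩ := hw ε hε
  exact eventually_atTop.2 ⟨n + 1, fun m hm ↦
    ((hanti hm).trans (greedyApprox_succ_le_of_le hcenter)).trans_lt hclose⟩

variable [MeasurableSpace V]

theorem measurable_dist_greedyApprox (hd : ∀ z, Measurable (d z)) (n : ℕ) :
    Measurable fun x ↦ d (greedyApprox d x₀ w n x) x := by
  induction n with
  | zero => exact hd x₀
  | succ n ih =>
    have hite : (fun x ↦ d (greedyApprox d x₀ w (n + 1) x) x) = fun x ↦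
        if d x₀ (w n) ≤ d x₀ x ∧ d (w n) x < d (greedyApprox d x₀ w n x) x then d (w n) x
        else d (greedyApprox d x₀ w n x) x := by
      ext x
      rw [greedyApprox]
      split_ifs <;> rfl
    rw [hite]
    exact Measurable.ite ((measurableSet_le measurable_const (hd x₀)).inter
      (measurableSet_lt (hd (w n)) ih)) (hd (w n)) ih

theorem measurable_greedyApprox (hd : ∀ z, Measurable (d z)) (n : ℕ) :
    Measurable (greedyApprox d x₀ w n) := by
  induction n with
  | zero => exact measurable_const
  | succ n ih =>
    exact Measurable.ite ((measurableSet_le measurable_const (hd x₀)).inter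
      (measurableSet_lt (hd (w n)) (measurable_dist_greedyApprox hd n))) measurable_const ih

end Greedy

section StarConvex

variable {V : Type*} {E : Set V} {d : V → V → ℝ}

theorem nonneg_of_triangle (hdself : ∀ x ∈ E, d x x = 0)
    (hdsymm : ∀ x ∈ E, ∀ y ∈ E, d x y = d y x)
    (hdtri : ∀ x ∈ E, ∀ y ∈ E, ∀ z ∈ E, d x z ≤ d x y + d y z) {x y : V} (hx : x ∈ E)
    (hy : y ∈ E) : 0 ≤ d x y := by
  have := hdtri x hx y hy x hx
  rw [hdself x hx, hdsymm y hy x hx] at this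
  linarith

variable [AddCommGroup V] [Module ℝ V] {D : Set V} {x₀ : V}

theorem exists_dist_center_le_dist_lt (hx₀ : x₀ ∈ E)
    (hstar : ∀ x ∈ E, ∀ l : ℝ, l ∈ Icc (0:ℝ) 1 → (1 - l) • x₀ + l • x ∈ E)
    (hdself : ∀ x ∈ E, d x x = 0)
    (hdsymm : ∀ x ∈ E, ∀ y ∈ E, d x y = d y x)
    (hdtri : ∀ x ∈ E, ∀ y ∈ E, ∀ z ∈ E, d x z ≤ d x y + d y z)
    (hDE : D ⊆ E) (hD : ∀ x ∈ E, ∀ ε : ℝ, 0 < ε → ∃ y ∈ D, d x y < ε)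
    (hconv : ∀ l ∈ Icc (0:ℝ) 1, ∀ x ∈ E, ∀ y ∈ E,
      d ((1 - l) • x₀ + l • x) y ≤ (1 - l) * d x₀ y + l * d x y)
    {x : V} (hx : x ∈ E) {ε : ℝ} (hε : 0 < ε) :
    ∃ y ∈ insert x₀ D, d x₀ y ≤ d x₀ x ∧ d y x < ε := by
  set r := d x₀ x
  rcases (nonneg_of_triangle hdself hdsymm hdtri hx₀ hx).eq_or_lt with hr | hr
  · exact ⟨x₀, mem_insert _ _, by rw [hdself x₀ hx₀, hr], hr ▸ hε⟩
  set s := min r (ε / 2)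
  have hs : 0 < s := lt_min hr (half_pos hε)
  set l := 1 - s / r
  have hl : l ∈ Icc (0:ℝ) 1 :=
    ⟨sub_nonneg.2 ((div_le_one hr).2 (min_le_left _ _)), sub_le_self _ (div_pos hs hr).le⟩
  set z := (1 - l) • x₀ + l • x
  have hz : z ∈ E := hstar x hx l hl
  have hzx₀ : d x₀ z ≤ r - s := by
    have := hconv l hl x hx x₀ hx₀
    rw [hdself x₀ hx₀, hdsymm x hx x₀ hx₀, ← hdsymm x₀ hx₀ z hz] at this
    have hlr : l * r = r - s := by
      rw [sub_mul, one_mul, div_mul_cancel₀ s (show r ≠ 0 from hr.ne')]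
    linarith
  have hzx : d z x ≤ s := by
    have := hconv l hl x hx x hx
    rw [hdself x hx] at this
    have hlr : (1 - l) * r = s := by simp only [l, sub_sub_cancel]; exact div_mul_cancel₀ s hr.ne'
    linarith
  obtain ⟨y, hyD, hzy⟩ := hD z hz s hs
  have hy := hDE hyD
  refine ⟨y, mem_insert_of_mem _ hyD, ?_, ?_⟩
  · linarith [hdtri x₀ hx₀ z hz y hy]
  · have := hdtri y hy z hz x hx
    rw [hdsymm y hy z hz] at this
    linarith [min_le_right r (ε / 2)]

end StarConvex

/-- Pointwise approximation of the identity on a separable star-convex metric set by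
Borel measurable maps with finitely many values. -/
theorem stmt4 {V : Type*} [AddCommGroup V] [Module ℝ V]
    (E : Set V) (x₀ : V) (hx₀ : x₀ ∈ E)
    (hstar : ∀ x ∈ E, ∀ l : ℝ, l ∈ Icc (0:ℝ) 1 → (1 - l) • x₀ + l • x ∈ E)
    (d : V → V → ℝ)
    (hd0 : ∀ x ∈ E, ∀ y ∈ E, (d x y = 0 ↔ x = y))
    (hdsymm : ∀ x ∈ E, ∀ y ∈ E, d x y = d y x)
    (hdtri : ∀ x ∈ E, ∀ y ∈ E, ∀ z ∈ E, d x z ≤ d x y + d y z)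
    -- separability of `E` with respect to `d`
    (hsep : ∃ D ⊆ E, D.Countable ∧ ∀ x ∈ E, ∀ ε : ℝ, 0 < ε → ∃ y ∈ D, d x y < ε)
    -- convexity condition on the metric
    (hconv : ∀ l ∈ Icc (0:ℝ) 1, ∀ x ∈ E, ∀ y ∈ E,
      d ((1 - l) • x₀ + l • x) y ≤ (1 - l) * d x₀ y + l * d x y) :
    ∃ φ : ℕ → V → V,
      (∀ n, Set.MapsTo (φ n) E E) ∧
      -- each `φ n` takes finitely many values on `E`
      (∀ n, ((φ n) '' E).Finite) ∧
      -- each `φ n` is Borel measurable for the `d`-metric topology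
      (∀ n, @Measurable V V
        (MeasurableSpace.generateFrom {B : Set V | ∃ x r, B = {y | d x y < r}})
        (MeasurableSpace.generateFrom {B : Set V | ∃ x r, B = {y | d x y < r}}) (φ n)) ∧
      (∀ k, ∀ x ∈ E, d (φ k x) x₀ ≤ d x x₀) ∧
      (∀ k, ∀ x ∈ E, d (φ (k + 1) x) x ≤ d (φ k x) x) ∧
      (∀ x ∈ E, Tendsto (fun n => d (φ n x) x) atTop (nhds 0)) := by
  obtain ⟨D, hDE, hDc, hD⟩ := hsep
  have hdself : ∀ x ∈ E, d x x = 0 := fun x hx ↦ (hd0 x hx x hx).2 rfl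
  obtain ⟨w, hw⟩ := (hDc.insert x₀).exists_eq_range (insert_nonempty x₀ D)
  have hwE : ∀ n, w n ∈ E := fun n ↦ insert_subset hx₀ hDE (hw ▸ mem_range_self n)
  have hφE := greedyApprox_mem (d := d) hx₀ hwE
  let _ : MeasurableSpace V := .generateFrom {B : Set V | ∃ x r, B = {y | d x y < r}}
  have hd : ∀ z, Measurable (d z) := fun z ↦
    measurable_of_Iio fun r ↦ MeasurableSpace.measurableSet_generateFrom ⟨z, r, rfl⟩
  refine ⟨greedyApprox d x₀ w, fun n x _ ↦ hφE n x, fun n ↦ greedyApprox_image_finite n E,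
    measurable_greedyApprox hd, fun k x hx ↦ ?_, fun k x _ ↦ greedyApprox_succ_le k x,
    fun x hx ↦ ?_⟩
  · rw [hdsymm _ (hφE k x) x₀ hx₀, hdsymm x hx x₀ hx₀]
    exact dist_center_greedyApprox_le
      (by rw [hdself x₀ hx₀]; exact nonneg_of_triangle hdself hdsymm hdtri hx₀ hx) k
  refine tendsto_dist_greedyApprox
    (fun n ↦ nonneg_of_triangle hdself hdsymm hdtri (hφE n x) hx) fun ε hε ↦ ?_
  obtain ⟨y, hy, hyx⟩ :=
    exists_dist_center_le_dist_lt hx₀ hstar hdself hdsymm hdtri hDE hD hconv hx hε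
  obtain ⟨n, rfl⟩ : y ∈ range w := hw ▸ hy
  exact ⟨n, hyx⟩
end

section
/- Let E be a complete separable metric space with metric d, p ≥ 1, and μ = Σ_{i=1}^n αᵢ δ_{xᵢ} ∈ P_p(E) with pairwise distinct x₁,…,x_n ∈ E and α ∈ (0,1]^n, Σᵢ αᵢ = 1. Then for every ν ∈ P_p(E), W_p(μ, ν)^p equals the minimum over all (ν₁,…,ν_n) ∈ P_p(E)^n with Σᵢ αᵢ νᵢ = ν of Σ_{i=1}^n αᵢ ∫_E d(x, xᵢ)^p dνᵢ(x), and this minimum is attained. -/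
/-!
Disintegrating a coupling `θ` of `μ = ∑ αᵢ δ_{xᵢ}` and `ν` along the atoms of its first marginal
splits `ν` into the pieces `ρᵢ`, the second marginal of `θ` on `{xᵢ} × E`, of masses `αᵢ` and with
`∑ ∫ d(z, xᵢ)^p dρᵢ` the cost of `θ`; conversely every such splitting gives the coupling
`∑ δ_{xᵢ} ⊗ ρᵢ`. So `W_p(μ, ν)^p` is the infimum of the splitting cost. It is attained: all pieces
are dominated by `ν`, so along an ultrafilter refining a minimizing sequence they converge setwise
to measures, the constraints pass to the limit, and the cost is lower semicontinuous for setwise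
convergence.
-/

open MeasureTheory ENNReal

/-- The `p`-th Wasserstein distance: the infimum over couplings of
`(∫ d(x,y)^p dθ)^(1/p)`. -/
noncomputable def wassersteinP {E : Type*} [MetricSpace E] [MeasurableSpace E]
    (p : ℝ) (μ ν : Measure E) : ℝ≥0∞ :=
  (⨅ θ ∈ {θ : Measure (E × E) |
      IsProbabilityMeasure θ ∧ θ.map Prod.fst = μ ∧ θ.map Prod.snd = ν},
    ∫⁻ z, edist z.1 z.2 ^ p ∂θ) ^ (1 / p)

/-- Membership in the `p`-th Wasserstein space `P_p(E)`. -/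
def memWassersteinSpace {E : Type*} [MetricSpace E] [MeasurableSpace E]
    (p : ℝ) (μ : Measure E) : Prop :=
  IsProbabilityMeasure μ ∧ ∃ x₀ : E, ∫⁻ x, edist x x₀ ^ p ∂μ ≠ ∞

open Filter Topology NNReal

lemma Ultrafilter.tendsto_nhds_lim_map {β X : Type*} [TopologicalSpace X] [CompactSpace X]
    (𝒰 : Ultrafilter β) (f : β → X) : Tendsto f 𝒰 (𝓝 (𝒰.map f).lim) :=
  (𝒰.map f).le_nhds_lim

namespace MeasureTheory

variable {α : Type*} [MeasurableSpace α]

lemma isSetRing_measurableSet : IsSetRing {s : Set α | MeasurableSet s} :=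
  ⟨.empty, fun _ _ => .union, fun _ _ => .diff⟩

lemma exists_measure_eq_of_additive_of_le (ν : Measure α) [IsFiniteMeasure ν]
    (m : Set α → ℝ≥0∞)
    (hadd : ∀ s t, MeasurableSet s → MeasurableSet t → Disjoint s t → m (s ∪ t) = m s + m t)
    (hle : ∀ s, MeasurableSet s → m s ≤ ν s) :
    ∃ Λ : Measure α, ∀ s, MeasurableSet s → Λ s = m s := by
  have h0 : m ∅ = 0 := le_zero_iff.1 ((hle ∅ .empty).trans_eq measure_empty)
  let M := isSetRing_measurableSet.addContent_of_union m h0 fun hs ht => hadd _ _ hs ht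
  refine ⟨Measure.ofMeasurable (fun s _ => m s) h0 fun f hf hd => ?_,
    fun s hs => Measure.ofMeasurable_apply s hs⟩
  refine addContent_iUnion_eq_sum_of_tendsto_zero isSetRing_measurableSet M
    (fun s hs => ne_top_of_le_ne_top (measure_ne_top ν s) (hle s hs)) ?_ hf (.iUnion hf) hd
  -- domination by the finite measure `ν` gives continuity at `∅`
  intro s hs hanti hempty
  have hν := tendsto_measure_iInter_atTop (μ := ν) (fun n => (hs n).nullMeasurableSet) hanti
    ⟨0, measure_ne_top _ _⟩
  rw [hempty, measure_empty] at hν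
  exact tendsto_of_tendsto_of_tendsto_of_le_of_le tendsto_const_nhds hν (fun _ => zero_le)
    fun n => hle _ (hs n)

lemma exists_tendsto_measure_of_le {β : Type*} (𝒰 : Ultrafilter β) (ν : Measure α)
    [IsFiniteMeasure ν] (ρ : β → Measure α) (hρ : ∀ k, ρ k ≤ ν) :
    ∃ Λ : Measure α, ∀ s, MeasurableSet s → Tendsto (fun k => ρ k s) 𝒰 (𝓝 (Λ s)) := by
  set m : Set α → ℝ≥0∞ := fun s => (𝒰.map fun k => ρ k s).lim
  have hm (s : Set α) : Tendsto (fun k => ρ k s) 𝒰 (𝓝 (m s)) := 𝒰.tendsto_nhds_lim_map _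
  obtain ⟨Λ, hΛ⟩ := exists_measure_eq_of_additive_of_le ν m
    (fun s t _ ht hst => tendsto_nhds_unique (hm (s ∪ t))
      (by simpa only [measure_union hst ht] using (hm s).add (hm t)))
    fun s _ => le_of_tendsto' (hm s) fun k => hρ k s
  exact ⟨Λ, fun s hs => hΛ s hs ▸ hm s⟩

lemma lintegral_le_of_tendsto_setwise {β : Type*} {l : Filter β} [l.NeBot]
    {ρ : β → Measure α} {Λ : Measure α}
    (hρ : ∀ s, MeasurableSet s → Tendsto (fun k => ρ k s) l (𝓝 (Λ s)))
    (f : α → ℝ≥0∞) {t : ℝ≥0∞} (ht : Tendsto (fun k => ∫⁻ z, f z ∂(ρ k)) l (𝓝 t)) :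
    ∫⁻ z, f z ∂Λ ≤ t := by
  rw [lintegral_eq_nnreal]
  refine iSup₂_le fun φ hφ => ?_
  have hφρ : Tendsto (fun k => (φ.map ((↑) : ℝ≥0 → ℝ≥0∞)).lintegral (ρ k)) l
      (𝓝 ((φ.map ((↑) : ℝ≥0 → ℝ≥0∞)).lintegral Λ)) := by
    simp only [SimpleFunc.map_lintegral]
    exact tendsto_finsetSum _ fun a _ =>
      ENNReal.Tendsto.const_mul (hρ _ (φ.measurableSet_fiber a)) (.inr ENNReal.coe_ne_top)
  refine le_of_tendsto_of_tendsto' hφρ ht fun k => ?_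
  rw [← SimpleFunc.lintegral_eq_lintegral]
  exact lintegral_mono fun z => by simpa [SimpleFunc.coe_map] using hφ z

variable {ι : Type*} [Fintype ι]

def weightedDecompositions (w : ι → ℝ≥0∞) (ν : Measure α) : Set (ι → Measure α) :=
  {ρ | (∀ i, ρ i Set.univ = w i) ∧ ∑ i, ρ i = ν}

noncomputable def decompositionCost (c : ι → α → ℝ≥0∞) (ρ : ι → Measure α) : ℝ≥0∞ :=
  ∑ i, ∫⁻ z, c i z ∂(ρ i)

lemma le_of_mem_weightedDecompositions {w : ι → ℝ≥0∞} {ν : Measure α} {ρ : ι → Measure α}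
    (hρ : ρ ∈ weightedDecompositions w ν) (i : ι) : ρ i ≤ ν :=
  hρ.2 ▸ Finset.single_le_sum (fun j _ => (ρ j).zero_le) (Finset.mem_univ i)

theorem exists_isMinOn_decompositionCost (c : ι → α → ℝ≥0∞) (w : ι → ℝ≥0∞) (ν : Measure α)
    [IsFiniteMeasure ν] (hne : (weightedDecompositions w ν).Nonempty) :
    ∃ ρ ∈ weightedDecompositions w ν,
      IsMinOn (decompositionCost c) (weightedDecompositions w ν) ρ := by
  set S := weightedDecompositions w ν
  obtain ⟨u, -, hu, huS⟩ := exists_seq_tendsto_sInf (hne.image (decompositionCost c))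
    (OrderBot.bddBelow _)
  choose ρ hρS hρu using huS
  let 𝒰 : Ultrafilter ℕ := .of atTop
  have hcost : Tendsto (fun k => decompositionCost c (ρ k)) 𝒰
      (𝓝 (sInf (decompositionCost c '' S))) := by
    simpa only [hρu] using hu.mono_left (Ultrafilter.of_le atTop)
  choose Λ hΛ using fun i => exists_tendsto_measure_of_le 𝒰 ν (fun k => ρ k i)
    fun k => le_of_mem_weightedDecompositions (hρS k) i
  have hΛS : Λ ∈ S := by
    refine ⟨fun i => tendsto_nhds_unique (hΛ i _ .univ) ?_, Measure.ext fun s hs => ?_⟩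
    · simpa only [(hρS _).1 i] using tendsto_const_nhds
    · rw [Measure.finsetSum_apply]
      refine tendsto_nhds_unique (tendsto_finsetSum _ fun i _ => hΛ i s hs) ?_
      simpa only [← Measure.finsetSum_apply, (hρS _).2] using tendsto_const_nhds
  have hΛcost : decompositionCost c Λ ≤ sInf (decompositionCost c '' S) := by
    let t i := (𝒰.map fun k => ∫⁻ z, c i z ∂(ρ k i)).lim
    have ht (i : ι) := 𝒰.tendsto_nhds_lim_map fun k => ∫⁻ z, c i z ∂(ρ k i)
    calc decompositionCost c Λ ≤ ∑ i, t i :=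
          Finset.sum_le_sum fun i _ => lintegral_le_of_tendsto_setwise (hΛ i) (c i) (ht i)
      _ = _ := tendsto_nhds_unique (tendsto_finsetSum _ fun i _ => ht i) hcost
  exact ⟨Λ, hΛS, fun ρ' hρ' => hΛcost.trans (csInf_le (OrderBot.bddBelow _) ⟨ρ', hρ', rfl⟩)⟩

lemma sum_smul_dirac_apply_singleton {x : ι → α} (hx : Function.Injective x) (w : ι → ℝ≥0∞)
    [MeasurableSingletonClass α] (i : ι) :
    (∑ j, w j • Measure.dirac (x j)) {x i} = w i := by
  rw [Measure.finsetSum_apply, Finset.sum_eq_single i (fun j _ hji => ?_) (by simp)]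
  · simp
  · simp [Measure.dirac_apply' _ (measurableSet_singleton _), hx.ne hji]

section Coupling

def couplings (μ ν : Measure α) : Set (Measure (α × α)) :=
  {θ | IsProbabilityMeasure θ ∧ θ.map Prod.fst = μ ∧ θ.map Prod.snd = ν}

variable {x : ι → α} {w : ι → ℝ≥0∞} {ν : Measure α}

lemma sum_map_prodMk_mem_couplings [IsProbabilityMeasure ν] {ρ : ι → Measure α}
    (hρ : ρ ∈ weightedDecompositions w ν) :
    ∑ i, (ρ i).map (Prod.mk (x i)) ∈ couplings (∑ i, w i • Measure.dirac (x i)) ν := by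
  have hsnd : (∑ i, (ρ i).map (Prod.mk (x i))).map Prod.snd = ν := by
    rw [Measure.map_finset_sum' measurable_snd.aemeasurable, ← hρ.2]
    refine Finset.sum_congr rfl fun i _ => ?_
    rw [Measure.map_map measurable_snd measurable_prodMk_left]
    exact Measure.map_id
  refine ⟨⟨?_⟩, ?_, hsnd⟩
  · rw [← measure_univ (μ := ν), ← hsnd, Measure.map_apply measurable_snd .univ,
      Set.preimage_univ]
  · rw [Measure.map_finset_sum' measurable_fst.aemeasurable]
    refine Finset.sum_congr rfl fun i _ => ?_
    rw [Measure.map_map measurable_fst measurable_prodMk_left]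
    exact (Measure.map_const _ _).trans (by rw [hρ.1 i])

lemma lintegral_sum_map_prodMk {c : α × α → ℝ≥0∞} (hc : Measurable c) (ρ : ι → Measure α) :
    ∫⁻ z, c z ∂(∑ i, (ρ i).map (Prod.mk (x i)))
      = decompositionCost (fun i z => c (x i, z)) ρ := by
  rw [lintegral_finsetSum_measure]
  exact Finset.sum_congr rfl fun i _ => lintegral_map hc measurable_prodMk_left

variable [MeasurableSingletonClass α] {θ : Measure (α × α)}

lemma sum_restrict_fst_preimage_singleton (hx : Function.Injective x)
    (hθ : θ.map Prod.fst = ∑ i, w i • Measure.dirac (x i)) :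
    ∑ i, θ.restrict (Prod.fst ⁻¹' {x i}) = θ := by
  have hdisj : Pairwise (Function.onFun Disjoint fun i => (Prod.fst ⁻¹' {x i} : Set (α × α))) :=
    fun i j hij => (Set.disjoint_singleton.2 (hx.ne hij)).preimage _
  rw [← Measure.sum_fintype, ← Measure.restrict_iUnion hdisj
    fun i => measurable_fst (measurableSet_singleton _), ← Set.preimage_iUnion,
    Set.iUnion_singleton_eq_range]
  refine Measure.restrict_eq_self_of_ae_mem
    (ae_of_ae_map (p := (· ∈ Set.range x)) measurable_fst.aemeasurable ?_)
  rw [hθ, ae_iff, Measure.finsetSum_apply]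
  exact Finset.sum_eq_zero fun i _ => by simp

theorem exists_mem_weightedDecompositions_of_mem_couplings (hx : Function.Injective x)
    (hθ : θ ∈ couplings (∑ i, w i • Measure.dirac (x i)) ν)
    {c : α × α → ℝ≥0∞} (hc : Measurable c) :
    ∃ ρ ∈ weightedDecompositions w ν,
      decompositionCost (fun i z => c (x i, z)) ρ = ∫⁻ z, c z ∂θ := by
  have hS (i : ι) : MeasurableSet (Prod.fst ⁻¹' {x i} : Set (α × α)) :=
    measurable_fst (measurableSet_singleton _)
  have hθsum := sum_restrict_fst_preimage_singleton hx hθ.2.1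
  refine ⟨fun i => (θ.restrict (Prod.fst ⁻¹' {x i})).map Prod.snd, ⟨fun i => ?_, ?_⟩, ?_⟩
  · rw [Measure.map_apply measurable_snd .univ, Measure.restrict_apply (measurable_snd .univ),
      Set.preimage_univ, Set.univ_inter, ← Measure.map_apply measurable_fst
      (measurableSet_singleton _), hθ.2.1, sum_smul_dirac_apply_singleton hx]
  · rw [← Measure.map_finset_sum' measurable_snd.aemeasurable, hθsum, hθ.2.2]
  · conv_rhs => rw [← hθsum, lintegral_finsetSum_measure]
    refine Finset.sum_congr rfl fun i _ => ?_
    rw [lintegral_map (f := fun z => c (x i, z)) (hc.comp measurable_prodMk_left) measurable_snd]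
    exact setLIntegral_congr_fun (hS i) fun z hz => by rw [← show z.1 = x i from hz]

end Coupling

end MeasureTheory

section Wasserstein

variable {E : Type*} [MetricSpace E] [MeasurableSpace E]

lemma wassersteinP_rpow {p : ℝ} (hp : p ≠ 0) (μ ν : Measure E) :
    wassersteinP p μ ν ^ p = ⨅ θ ∈ couplings μ ν, ∫⁻ z, edist z.1 z.2 ^ p ∂θ := by
  rw [wassersteinP, ← ENNReal.rpow_mul, one_div_mul_cancel hp, ENNReal.rpow_one]
  rfl

lemma memWassersteinSpace_inv_smul {p : ℝ} {ν ρ : Measure E} (hν : memWassersteinSpace p ν)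
    (hρν : ρ ≤ ν) {w : ℝ≥0∞} (hρ : ρ Set.univ = w) (hw : w ≠ 0) :
    memWassersteinSpace p (w⁻¹ • ρ) := by
  have := hν.1
  have hw_top : w ≠ ∞ := hρ ▸ ne_top_of_le_ne_top (measure_ne_top ν _) (hρν _)
  obtain ⟨x₀, hx₀⟩ := hν.2
  refine ⟨⟨by simp [hρ, ENNReal.inv_mul_cancel hw hw_top]⟩, x₀, ?_⟩
  rw [lintegral_smul_measure]
  exact ENNReal.mul_ne_top (ENNReal.inv_ne_top.2 hw)
    (ne_top_of_le_ne_top hx₀ (lintegral_mono' hρν le_rfl))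

variable [BorelSpace E] [SecondCountableTopology E] {ι : Type*} [Fintype ι]

theorem wassersteinP_rpow_eq_iInf_decompositionCost {p : ℝ} (hp : p ≠ 0) {x : ι → E}
    (hx : Function.Injective x) (w : ι → ℝ≥0∞) (ν : Measure E) [IsProbabilityMeasure ν] :
    wassersteinP p (∑ i, w i • Measure.dirac (x i)) ν ^ p
      = ⨅ ρ ∈ weightedDecompositions w ν, decompositionCost (fun i z => edist z (x i) ^ p) ρ := by
  have hc : Measurable fun z : E × E => edist z.2 z.1 ^ p :=
    (measurable_snd.edist measurable_fst).pow_const p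
  simp only [wassersteinP_rpow hp, edist_comm _ (Prod.snd _)]
  refine le_antisymm (le_iInf₂ fun ρ hρ => ?_) (le_iInf₂ fun θ hθ => ?_)
  · exact iInf₂_le_of_le _ (sum_map_prodMk_mem_couplings hρ)
      (lintegral_sum_map_prodMk hc ρ).le
  · obtain ⟨ρ, hρ, hcost⟩ := exists_mem_weightedDecompositions_of_mem_couplings hx hθ hc
    exact iInf₂_le_of_le ρ hρ hcost.le

end Wasserstein

theorem stmt6_general {E : Type*} [MetricSpace E]
    [TopologicalSpace.SeparableSpace E] [MeasurableSpace E] [BorelSpace E]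
    (p : ℝ) (hp : 1 ≤ p) (n : ℕ)
    (x : Fin n → E) (hx : Function.Injective x)
    (α : Fin n → ℝ) (hα : ∀ i, α i ∈ Set.Ioc (0:ℝ) 1) (hsum : ∑ i, α i = 1)
    (μ : Measure E) (hμ : μ = ∑ i, ENNReal.ofReal (α i) • Measure.dirac (x i))
    (ν : Measure E) (hν : memWassersteinSpace p ν) :
    ∃ g : Fin n → Measure E,
      (∀ i, memWassersteinSpace p (g i)) ∧
      ∑ i, ENNReal.ofReal (α i) • g i = ν ∧
      wassersteinP p μ ν ^ p
        = ∑ i, ENNReal.ofReal (α i) * ∫⁻ z, edist z (x i) ^ p ∂(g i) ∧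
      ∀ g' : Fin n → Measure E, (∀ i, memWassersteinSpace p (g' i)) →
        ∑ i, ENNReal.ofReal (α i) • g' i = ν →
        wassersteinP p μ ν ^ p
          ≤ ∑ i, ENNReal.ofReal (α i) * ∫⁻ z, edist z (x i) ^ p ∂(g' i) := by
  have := hν.1
  have hw0 (i : Fin n) : ENNReal.ofReal (α i) ≠ 0 := (ENNReal.ofReal_pos.2 (hα i).1).ne'
  have hwsum : ∑ i, ENNReal.ofReal (α i) = 1 := by
    rw [← ENNReal.ofReal_sum_of_nonneg fun i _ => (hα i).1.le, hsum, ENNReal.ofReal_one]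
  have hsmul (i : Fin n) (m : Measure E) :
      ENNReal.ofReal (α i) • (ENNReal.ofReal (α i))⁻¹ • m = m := by
    rw [smul_smul, ENNReal.mul_inv_cancel (hw0 i) ENNReal.ofReal_ne_top, one_smul]
  have hcost (g : Fin n → Measure E) :
      ∑ i, ENNReal.ofReal (α i) * ∫⁻ z, edist z (x i) ^ p ∂(g i)
        = decompositionCost (fun i z => edist z (x i) ^ p)
            fun i => ENNReal.ofReal (α i) • g i := by
    simp only [decompositionCost, lintegral_smul_measure, smul_eq_mul]
  have hW := hμ ▸ wassersteinP_rpow_eq_iInf_decompositionCost (by positivity) hx _ ν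
  obtain ⟨ρ, hρ, hmin⟩ := exists_isMinOn_decompositionCost (fun i z => edist z (x i) ^ p)
    (fun i => ENNReal.ofReal (α i)) ν
    ⟨fun i => ENNReal.ofReal (α i) • ν, fun i => by simp,
      by rw [← Finset.sum_smul, hwsum, one_smul]⟩
  refine ⟨fun i => (ENNReal.ofReal (α i))⁻¹ • ρ i, fun i => memWassersteinSpace_inv_smul hν
    (le_of_mem_weightedDecompositions hρ i) (hρ.1 i) (hw0 i), by simpa only [hsmul] using hρ.2,
    ?_, fun g' hg' hg'ν => ?_⟩
  · rw [hcost, hW]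
    simp only [hsmul]
    exact le_antisymm (iInf₂_le ρ hρ) (le_iInf₂ fun ρ' hρ' => hmin hρ')
  · rw [hcost, hW]
    exact iInf₂_le _ ⟨fun i => by simp [(hg' i).1.measure_univ], hg'ν⟩

/-- If `μ = Σᵢ αᵢ δ_{xᵢ}` with pairwise distinct atoms and positive weights summing
to one, then for every `ν ∈ P_p(E)`, `W_p(μ,ν)^p` is the minimum, attained over all
decompositions `Σᵢ αᵢ νᵢ = ν` with `νᵢ ∈ P_p(E)`, of `Σᵢ αᵢ ∫ d(x, xᵢ)^p dνᵢ(x)`. -/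
theorem stmt6 {E : Type*} [MetricSpace E] [CompleteSpace E]
    [TopologicalSpace.SeparableSpace E] [MeasurableSpace E] [BorelSpace E]
    (p : ℝ) (hp : 1 ≤ p) (n : ℕ) (hn : 0 < n)
    (x : Fin n → E) (hx : Function.Injective x)
    (α : Fin n → ℝ) (hα : ∀ i, α i ∈ Set.Ioc (0:ℝ) 1) (hsum : ∑ i, α i = 1)
    (μ : Measure E) (hμ : μ = ∑ i, ENNReal.ofReal (α i) • Measure.dirac (x i))
    (hμp : memWassersteinSpace p μ)
    (ν : Measure E) (hν : memWassersteinSpace p ν) :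
    ∃ g : Fin n → Measure E,
      (∀ i, memWassersteinSpace p (g i)) ∧
      ∑ i, ENNReal.ofReal (α i) • g i = ν ∧
      wassersteinP p μ ν ^ p
        = ∑ i, ENNReal.ofReal (α i) * ∫⁻ z, edist z (x i) ^ p ∂(g i) ∧
      ∀ g' : Fin n → Measure E, (∀ i, memWassersteinSpace p (g' i)) →
        ∑ i, ENNReal.ofReal (α i) • g' i = ν →
        wassersteinP p μ ν ^ p
          ≤ ∑ i, ENNReal.ofReal (α i) * ∫⁻ z, edist z (x i) ^ p ∂(g' i) :=
  stmt6_general p hp n x hx α hα hsum μ hμ ν hν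
end

section
/- Let I be a nondegenerate interval in ℝ, μ a σ-finite Borel measure on I, and k a nonnegative measurable kernel on {(t,s) ∈ I×I | s ≤ t} with values in [0,∞]. Define the iterated kernels R_{k,μ,1} := k and R_{k,μ,n+1}(t,s) := ∫_{[s,t]} k(t, s̃) R_{k,μ,n}(s̃, s) μ(ds̃). Suppose c₀ := sup_{t∈I} ∫_{[0,t]∩I} k(t,s)^p μ(ds) < ∞ and ε₀ := lim_{δ↓0} sup_{r,t∈I, r≤t≤r+δ} ∫_{[r,t]} k(t,s)^p μ(ds) < ∞ for some p > 0. Then for every ε > ε₀ there exists δ > 0 such that for all m, n ∈ ℕ: sup_{r,t∈I, r≤t≤r+mδ} ∫_{[r,t]} R_{k^p,μ,n}(t,s) μ(ds) ≤ (n c_ε)^{m-1} ε^n, where c_ε := max{1, c₀/ε}. -/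
/-!
Write `K = k^p`. By Tonelli,
`∫_{[r,t]} R_{n+1}(t,s) ds = ∫_{[r,t]} K(t,u) (∫_{[r,u]} R_n(u,s) ds) du`.
Choose `δ` so that `∫_{[r,t]} K(t,·) ≤ ε` whenever `t - r ≤ δ`; globally
`∫_{[r,t]} K(t,·) ≤ c₀ ≤ c ε`.
Induct on `n`, and for a window `[r,t]` of length at most `mδ` with `m ≥ 2` split the outer
integral at `q = min t (r + (m-1)δ)`: on `[r,q]` the weight is at most `c ε` and the inner
integral lives on a window of length `(m-1)δ`, on `(q,t]` the weight is at most `ε`.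
The two pieces add up to `(nc)^{m-2} (n+1) c ε^{n+1} ≤ ((n+1)c)^{m-1} ε^{n+1}`.
-/

open MeasureTheory ENNReal Set

/-- The iterated kernels of a nonnegative kernel `k` relative to a measure `μ`:
`R_{k,μ,1} = k` and `R_{k,μ,n+1}(t,s) = ∫_{[s,t]} k(t,u) R_{k,μ,n}(u,s) μ(du)`
(the value at `n = 0` is junk). -/
noncomputable def iterK (μ : Measure ℝ) (k : ℝ → ℝ → ℝ≥0∞) : ℕ → ℝ → ℝ → ℝ≥0∞
  | 0 => fun _ _ => 0
  | 1 => k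
  | (n + 2) => fun t s => ∫⁻ u in Icc s t, k t u * iterK μ k (n + 1) u s ∂μ

open Function

theorem le_max_one_div_mul {a ε : ℝ≥0∞} (hε : ε ≠ 0) : a ≤ max 1 (a / ε) * ε := by
  rcases eq_or_ne ε ∞ with rfl | hεtop
  · simp
  · calc a = a / ε * ε := (ENNReal.div_mul_cancel hε hεtop).symm
      _ ≤ max 1 (a / ε) * ε := by gcongr; exact le_max_right _ _

theorem setLIntegral_mul_le_mul {α : Type*} [MeasurableSpace α] {μ : Measure α} {s : Set α}
    (hs : MeasurableSet s) {f g : α → ℝ≥0∞} (hf : Measurable f) {a b : ℝ≥0∞}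
    (hfa : ∫⁻ x in s, f x ∂μ ≤ a) (hgb : ∀ x ∈ s, g x ≤ b) :
    ∫⁻ x in s, f x * g x ∂μ ≤ a * b :=
  calc ∫⁻ x in s, f x * g x ∂μ ≤ ∫⁻ x in s, f x * b ∂μ :=
        setLIntegral_mono' hs fun x hx => by gcongr; exact hgb x hx
    _ = (∫⁻ x in s, f x ∂μ) * b := lintegral_mul_const b hf
    _ ≤ a * b := by gcongr

section Kernel

variable {μ : Measure ℝ} [SFinite μ]

theorem lintegral_Icc_triangle_swap {f : ℝ → ℝ → ℝ≥0∞} (hf : Measurable (uncurry f)) (r t : ℝ) :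
    ∫⁻ s in Icc r t, ∫⁻ u in Icc s t, f u s ∂μ ∂μ
      = ∫⁻ u in Icc r t, ∫⁻ s in Icc r u, f u s ∂μ ∂μ := by
  set T : Set (ℝ × ℝ) := {z | r ≤ z.1 ∧ z.1 ≤ z.2 ∧ z.2 ≤ t}
  have hT : MeasurableSet T :=
    (measurableSet_le measurable_const measurable_fst).inter
      ((measurableSet_le measurable_fst measurable_snd).inter
        (measurableSet_le measurable_snd measurable_const))
  have hF : Measurable (T.indicator fun z => f z.2 z.1) :=
    (hf.comp measurable_swap).indicator hT
  calc _ = ∫⁻ s, ∫⁻ u, T.indicator (fun z => f z.2 z.1) (s, u) ∂μ ∂μ := by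
        rw [← lintegral_indicator measurableSet_Icc]
        congr 1 with s
        by_cases hs : s ∈ Icc r t
        · rw [indicator_of_mem hs, ← lintegral_indicator measurableSet_Icc]
          congr 1 with u
          simp [indicator_apply, T, hs.1]
        · have hsT (u : ℝ) : (s, u) ∉ T := fun h => hs ⟨h.1, h.2.1.trans h.2.2⟩
          simp [indicator_of_notMem hs, indicator_of_notMem (hsT _)]
    _ = ∫⁻ u, ∫⁻ s, T.indicator (fun z => f z.2 z.1) (s, u) ∂μ ∂μ :=
        lintegral_lintegral_swap hF.aemeasurable
    _ = _ := by
        rw [← lintegral_indicator measurableSet_Icc]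
        congr 1 with u
        by_cases hu : u ∈ Icc r t
        · rw [indicator_of_mem hu, ← lintegral_indicator measurableSet_Icc]
          congr 1 with s
          simp [indicator_apply, T, hu.2]
        · have huT (s : ℝ) : (s, u) ∉ T := fun h => hu ⟨h.1.trans h.2.1, h.2.2⟩
          simp [indicator_of_notMem hu, indicator_of_notMem (huT _)]

theorem measurable_iterK {K : ℝ → ℝ → ℝ≥0∞} (hK : Measurable (uncurry K)) :
    ∀ n, Measurable (uncurry (iterK μ K n))
  | 0 => measurable_const
  | 1 => hK
  | n + 2 => by
    set T : Set ((ℝ × ℝ) × ℝ) := {x | x.1.2 ≤ x.2 ∧ x.2 ≤ x.1.1}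
    have hT : MeasurableSet T :=
      (measurableSet_le measurable_fst.snd measurable_snd).inter
        (measurableSet_le measurable_snd measurable_fst.fst)
    have hF : Measurable (T.indicator fun x => K x.1.1 x.2 * iterK μ K (n + 1) x.2 x.1.2) :=
      ((hK.comp (measurable_fst.fst.prodMk measurable_snd)).mul
        ((measurable_iterK hK (n + 1)).comp
          (measurable_snd.prodMk measurable_fst.snd))).indicator hT
    convert hF.lintegral_prod_right' (ν := μ) with q
    change ∫⁻ u in Icc q.2 q.1, _ ∂μ = _
    rw [← lintegral_indicator measurableSet_Icc]
    rfl

theorem setLIntegral_iterK_add_two {K : ℝ → ℝ → ℝ≥0∞} (hK : Measurable (uncurry K))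
    (n : ℕ) (r t : ℝ) :
    ∫⁻ s in Icc r t, iterK μ K (n + 2) t s ∂μ
      = ∫⁻ u in Icc r t, K t u * ∫⁻ s in Icc r u, iterK μ K (n + 1) u s ∂μ ∂μ := by
  have hf : Measurable (uncurry fun u s => K t u * iterK μ K (n + 1) u s) :=
    (hK.comp (measurable_const.prodMk measurable_fst)).mul (measurable_iterK hK (n + 1))
  rw [show ∫⁻ s in Icc r t, iterK μ K (n + 2) t s ∂μ
      = ∫⁻ s in Icc r t, ∫⁻ u in Icc s t, K t u * iterK μ K (n + 1) u s ∂μ ∂μ from rfl,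
    lintegral_Icc_triangle_swap hf r t]
  congr 1 with u
  exact lintegral_const_mul _ (measurable_iterK hK (n + 1)).of_uncurry_left

end Kernel

section Estimate

/-- The claim for `R_{n+1}` and windows of length `(m+1)δ`: the indices are shifted so that no
truncated subtraction occurs. -/
def IterKEstimate (μ : Measure ℝ) (I : Set ℝ) (K : ℝ → ℝ → ℝ≥0∞) (c ε : ℝ≥0∞) (δ : ℝ)
    (n : ℕ) : Prop :=
  ∀ m : ℕ, ∀ r ∈ I, ∀ t ∈ I, r ≤ t → t ≤ r + ((m + 1 : ℕ) : ℝ) * δ →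
    ∫⁻ s in Icc r t, iterK μ K (n + 1) t s ∂μ ≤ (((n + 1 : ℕ) : ℝ≥0∞) * c) ^ m * ε ^ (n + 1)

variable {μ : Measure ℝ} {I : Set ℝ} {K : ℝ → ℝ → ℝ≥0∞} {c ε : ℝ≥0∞} {δ : ℝ}
  (hloc : ∀ r ∈ I, ∀ t ∈ I, r ≤ t → t ≤ r + δ → ∫⁻ s in Icc r t, K t s ∂μ ≤ ε)
  (hglob : ∀ r ∈ I, ∀ t ∈ I, r ≤ t → ∫⁻ s in Icc r t, K t s ∂μ ≤ c * ε)
include hloc hglob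

theorem iterKEstimate_zero (hc : 1 ≤ c) : IterKEstimate μ I K c ε δ 0 := by
  intro m r hr t ht hrt htm
  rcases m with _ | m
  · simpa [iterK] using hloc r hr t ht hrt (by simpa using htm)
  · calc ∫⁻ s in Icc r t, iterK μ K 1 t s ∂μ ≤ c * ε := hglob r hr t ht hrt
      _ ≤ c ^ (m + 1) * ε := by gcongr; exact le_self_pow₀ hc (by omega)
      _ = _ := by simp

theorem iterKEstimate_succ [SFinite μ] (hI : I.OrdConnected) (hK : Measurable (uncurry K))
    (hδ : 0 ≤ δ) {n : ℕ} (ih : IterKEstimate μ I K c ε δ n) :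
    IterKEstimate μ I K c ε δ (n + 1) := by
  intro m r hr t ht hrt htm
  have hKt : Measurable (K t) := hK.of_uncurry_left
  rw [setLIntegral_iterK_add_two hK]
  rcases m with _ | m
  · have hinner (u : ℝ) (hu : u ∈ Icc r t) :
        ∫⁻ s in Icc r u, iterK μ K (n + 1) u s ∂μ ≤ ε ^ (n + 1) := by
      simpa using ih 0 r hr u (hI.out hr ht hu) hu.1 (hu.2.trans htm)
    calc _ ≤ ε * ε ^ (n + 1) :=
          setLIntegral_mul_le_mul measurableSet_Icc hKt
            (hloc r hr t ht hrt (by simpa using htm)) hinner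
      _ = _ := by ring
  · set q := min t (r + ((m + 1 : ℕ) : ℝ) * δ)
    have hrq : r ≤ q := le_min hrt (le_add_of_nonneg_right (by positivity))
    have hqt : q ≤ t := min_le_left _ _
    have hqI : q ∈ I := hI.out hr ht ⟨hrq, hqt⟩
    have htq : t ≤ q + δ := by
      rw [← min_add_add_right]
      push_cast at htm ⊢
      exact le_min (by linarith) (by linarith)
    rw [← Icc_union_Ioc_eq_Icc hrq hqt,
      lintegral_union measurableSet_Ioc ((Iic_disjoint_Ioc le_rfl).mono_left Icc_subset_Iic_self)]
    have hnear := setLIntegral_mul_le_mul measurableSet_Icc hKt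
      ((lintegral_mono_set (Icc_subset_Icc_right hqt)).trans (hglob r hr t ht hrt))
      fun u hu => ih m r hr u (hI.out hr hqI hu) hu.1 (hu.2.trans (min_le_right _ _))
    have hfar := setLIntegral_mul_le_mul measurableSet_Ioc hKt
      ((lintegral_mono_set Ioc_subset_Icc_self).trans (hloc q hqI t ht hqt htq))
      fun u hu => ih (m + 1) r hr u (hI.out hr ht ⟨hrq.trans hu.1.le, hu.2⟩)
        (hrq.trans hu.1.le) (hu.2.trans htm)
    set N : ℝ≥0∞ := ((n + 1 : ℕ) : ℝ≥0∞)
    have hN : ((n + 1 + 1 : ℕ) : ℝ≥0∞) = N + 1 := by simp only [N]; push_cast; ring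
    calc _ ≤ c * ε * ((N * c) ^ m * ε ^ (n + 1)) + ε * ((N * c) ^ (m + 1) * ε ^ (n + 1)) :=
          add_le_add hnear hfar
      _ = (N * c) ^ m * ((N + 1) * c) * ε ^ (n + 1 + 1) := by ring
      _ ≤ ((N + 1) * c) ^ m * ((N + 1) * c) * ε ^ (n + 1 + 1) := by
          gcongr; exact le_self_add
      _ = _ := by rw [hN, ← pow_succ]

theorem iterKEstimate [SFinite μ] (hI : I.OrdConnected) (hK : Measurable (uncurry K))
    (hδ : 0 ≤ δ) (hc : 1 ≤ c) (n : ℕ) : IterKEstimate μ I K c ε δ n := by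
  induction n with
  | zero => exact iterKEstimate_zero hloc hglob hc
  | succ n ih => exact iterKEstimate_succ hloc hglob hI hK hδ ih

end Estimate

theorem stmt9_general (I : Set ℝ) (hI : I.OrdConnected)
    (μ : Measure ℝ) [SigmaFinite μ]
    (k : ℝ → ℝ → ℝ≥0∞) (hk : Measurable fun q : ℝ × ℝ => k q.1 q.2)
    (p : ℝ)
    (c₀ : ℝ≥0∞)
    (hc₀ : c₀ = ⨆ t ∈ I, ∫⁻ s in {s | s ∈ I ∧ s ≤ t}, k t s ^ p ∂μ)
    (ε₀ : ℝ≥0∞)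
    (hε₀ : ε₀ = ⨅ δ ∈ Ioi (0:ℝ), ⨆ r ∈ I, ⨆ t ∈ I, ⨆ _ : r ≤ t ∧ t ≤ r + δ,
        ∫⁻ s in Icc r t, k t s ^ p ∂μ)
    (ε : ℝ≥0∞) (hε : ε₀ < ε) :
    ∃ δ : ℝ, 0 < δ ∧ ∀ m n : ℕ, 1 ≤ m → 1 ≤ n →
      (⨆ r ∈ I, ⨆ t ∈ I, ⨆ _ : r ≤ t ∧ t ≤ r + (m : ℝ) * δ,
        ∫⁻ s in Icc r t, iterK μ (fun t' s' => k t' s' ^ p) n t s ∂μ)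
      ≤ ((n : ℝ≥0∞) * max 1 (c₀ / ε)) ^ (m - 1) * ε ^ n := by
  obtain ⟨δ, hδ, hδε⟩ : ∃ δ ∈ Ioi (0:ℝ), (⨆ r ∈ I, ⨆ t ∈ I, ⨆ _ : r ≤ t ∧ t ≤ r + δ,
      ∫⁻ s in Icc r t, k t s ^ p ∂μ) < ε := by
    simpa only [hε₀, iInf_lt_iff, exists_prop] using hε
  have hloc (r) (hr : r ∈ I) (t) (ht : t ∈ I) (hrt : r ≤ t) (htr : t ≤ r + δ) :
      ∫⁻ s in Icc r t, k t s ^ p ∂μ ≤ ε := by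
    refine le_trans ?_ hδε.le
    exact le_iSup₂_of_le r hr <| le_iSup₂_of_le t ht <| le_iSup_of_le ⟨hrt, htr⟩ le_rfl
  have hglob (r) (hr : r ∈ I) (t) (ht : t ∈ I) (_ : r ≤ t) :
      ∫⁻ s in Icc r t, k t s ^ p ∂μ ≤ max 1 (c₀ / ε) * ε :=
    calc _ ≤ c₀ :=
          hc₀ ▸ le_iSup₂_of_le t ht (lintegral_mono_set fun s hs => ⟨hI.out hr ht hs, hs.2⟩)
      _ ≤ _ := le_max_one_div_mul (zero_le.trans_lt hε).ne'
  refine ⟨δ, hδ, fun m n hm hn => iSup₂_le fun r hr => iSup₂_le fun t ht => iSup_le fun hrt => ?_⟩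
  obtain ⟨m, rfl⟩ := Nat.exists_eq_add_of_le' hm
  obtain ⟨n, rfl⟩ := Nat.exists_eq_add_of_le' hn
  simpa using iterKEstimate hloc hglob hI (hk.pow_const p) (le_of_lt hδ) (le_max_left _ _)
    n m r hr t ht hrt.1 hrt.2

/-- First type of integral estimate for the iterated kernels of `k^p`. -/
theorem stmt9 (I : Set ℝ) (hI : I.OrdConnected) (hne : ∃ a ∈ I, ∃ b ∈ I, a < b)
    (μ : Measure ℝ) [SigmaFinite μ]
    (k : ℝ → ℝ → ℝ≥0∞) (hk : Measurable fun q : ℝ × ℝ => k q.1 q.2)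
    (p : ℝ) (hp : 0 < p)
    (c₀ : ℝ≥0∞)
    (hc₀ : c₀ = ⨆ t ∈ I, ∫⁻ s in {s | s ∈ I ∧ s ≤ t}, k t s ^ p ∂μ)
    (hc₀fin : c₀ ≠ ∞)
    (ε₀ : ℝ≥0∞)
    (hε₀ : ε₀ = ⨅ δ ∈ Ioi (0:ℝ), ⨆ r ∈ I, ⨆ t ∈ I, ⨆ _ : r ≤ t ∧ t ≤ r + δ,
        ∫⁻ s in Icc r t, k t s ^ p ∂μ)
    (hε₀fin : ε₀ ≠ ∞)
    (ε : ℝ≥0∞) (hε : ε₀ < ε) :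
    ∃ δ : ℝ, 0 < δ ∧ ∀ m n : ℕ, 1 ≤ m → 1 ≤ n →
      (⨆ r ∈ I, ⨆ t ∈ I, ⨆ _ : r ≤ t ∧ t ≤ r + (m : ℝ) * δ,
        ∫⁻ s in Icc r t, iterK μ (fun t' s' => k t' s' ^ p) n t s ∂μ)
      ≤ ((n : ℝ≥0∞) * max 1 (c₀ / ε)) ^ (m - 1) * ε ^ n :=
  stmt9_general I hI μ k hk p c₀ hc₀ ε₀ hε₀ ε hε
end

section
/- Let S be a nonempty set, F : ℓ₊ → ℝ₊ increasing, subadditive, vanishing only at 0, (d_i) a sequence of pseudometrics on S, and d(x,y) := F((d_i(x,y))_i). Assume (a) F(Σ_{i=1}^j v_i e_i) → 0 as v → 0 in ℝ₊^j for each j, and (b) sup_{x,y∈S} F(Σ_{i=j}^∞ d_i(x,y) e_i) → 0 as j → ∞. Then a sequence (x_n) in S converges with respect to d to a point x if and only if d_i(x_n, x) → 0 for every i ∈ ℕ; and (x_n) is Cauchy with respect to d if and only if it is Cauchy with respect to d_i for every i ∈ ℕ. -/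
/-!
Write `b = (bᵢ)` for the coordinate sequence, so that `d = F ∘ b`. Monotonicity and
`F a = 0 ↔ a = 0` give `bᵢ < ε` whenever `F b < F (Pi.single i ε)`, so `d`-convergence forces
convergence of each coordinate. Conversely, subadditivity splits `F b` into a head
`F(Σ_{i<j} bᵢ eᵢ)`, small by (a) once finitely many coordinates are small, and a tail
`F(Σ_{i≥j} bᵢ eᵢ)`, small uniformly by (b). Being Cauchy is convergence of `(m, n) ↦ d(uₘ, uₙ)` to `0`
along `atTop` on `ℕ × ℕ`, so it is the same statement for pairs of indices.
-/

open Filter Topology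

section Functional

variable {F : (ℕ → NNReal) → NNReal}

lemma exists_pos_forall_apply_lt_of_lt {ι : Type*} [DecidableEq ι]
    {F : (ι → NNReal) → NNReal} (hmono : Monotone F) (hzero : ∀ a, F a = 0 ↔ a = 0)
    (i : ι) {ε : NNReal} (hε : 0 < ε) :
    ∃ δ : NNReal, 0 < δ ∧ ∀ a, F a < δ → a i < ε := by
  refine ⟨F (Pi.single i ε), ?_, fun a ha => ?_⟩
  · rw [pos_iff_ne_zero, Ne, hzero, Pi.single_eq_zero_iff]
    exact hε.ne'
  · by_contra! hle
    refine ha.not_ge (hmono fun j => ?_)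
    rcases eq_or_ne j i with rfl | hji
    · simpa using hle
    · simp [hji]

lemma le_add_head_tail (hsubadd : ∀ a b, F (a + b) ≤ F a + F b) (a : ℕ → NNReal) (j : ℕ) :
    F a ≤ F (fun i => if i < j then a i else 0) + F (fun i => if j ≤ i then a i else 0) := by
  convert hsubadd _ _ using 2
  funext i
  by_cases h : i < j
  · simp [h, not_le.2 h]
  · simp [h, not_lt.1 h]

lemma exists_pos_forall_head_lt
    (ha : ∀ j : ℕ, ∀ ε : NNReal, 0 < ε → ∃ δ : NNReal, 0 < δ ∧
      ∀ v : ℕ → NNReal, (∀ i, v i ≤ δ) → F (fun i => if i < j then v i else 0) < ε)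
    (j : ℕ) {ε : NNReal} (hε : 0 < ε) :
    ∃ δ : NNReal, 0 < δ ∧
      ∀ a : ℕ → NNReal, (∀ i < j, a i ≤ δ) → F (fun i => if i < j then a i else 0) < ε := by
  obtain ⟨δ, hδ, hδF⟩ := ha j ε hε
  refine ⟨δ, hδ, fun a haδ => ?_⟩
  convert hδF (fun i => if i < j then a i else 0) fun i => ?_ using 2
  · funext i
    split_ifs <;> rfl
  · split_ifs with h
    exacts [haδ i h, zero_le]

theorem tendsto_nhds_zero_iff_forall_tendsto_apply {β : Type*} {l : Filter β}
    (hmono : Monotone F) (hsubadd : ∀ a b, F (a + b) ≤ F a + F b)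
    (hzero : ∀ a, F a = 0 ↔ a = 0)
    (ha : ∀ j : ℕ, ∀ ε : NNReal, 0 < ε → ∃ δ : NNReal, 0 < δ ∧
      ∀ v : ℕ → NNReal, (∀ i, v i ≤ δ) → F (fun i => if i < j then v i else 0) < ε)
    (b : β → ℕ → NNReal)
    (htail : ∀ ε : NNReal, 0 < ε → ∃ j, ∀ᶠ n in l, F (fun i => if j ≤ i then b n i else 0) < ε) :
    Tendsto (fun n => F (b n)) l (𝓝 0) ↔ ∀ i, Tendsto (fun n => b n i) l (𝓝 0) := by
  simp only [NNReal.nhds_zero_basis.tendsto_right_iff, Set.mem_Iio]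
  constructor
  · intro h i ε hε
    obtain ⟨δ, hδ, hδb⟩ := exists_pos_forall_apply_lt_of_lt hmono hzero i hε
    exact (h δ hδ).mono fun n => hδb (b n)
  · intro h ε hε
    obtain ⟨j, hj⟩ := htail (ε / 2) (half_pos hε)
    obtain ⟨δ, hδ, hδF⟩ := exists_pos_forall_head_lt ha j (half_pos hε)
    have hhead : ∀ᶠ n in l, ∀ i < j, b n i ≤ δ := by
      refine ((eventually_all_finset (Finset.range j)).2 fun i _ => h i δ hδ).mono ?_
      exact fun n hn i hi => (hn i (Finset.mem_range.2 hi)).le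
    filter_upwards [hj, hhead] with n hnj hnδ
    calc F (b n)
        ≤ F (fun i => if i < j then b n i else 0) + F (fun i => if j ≤ i then b n i else 0) :=
          le_add_head_tail hsubadd _ j
      _ < ε / 2 + ε / 2 := add_lt_add (hδF _ hnδ) hnj
      _ = ε := add_halves ε

end Functional

lemma NNReal.cauchy_condition_iff_tendsto (f : ℕ → ℕ → NNReal) :
    (∀ ε : NNReal, 0 < ε → ∃ N : ℕ, ∀ m ≥ N, ∀ n ≥ N, f m n < ε) ↔
      Tendsto (fun p : ℕ × ℕ => f p.1 p.2) atTop (𝓝 0) := by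
  simp only [NNReal.nhds_zero_basis.tendsto_right_iff, Set.mem_Iio, eventually_atTop_prod_self']

theorem stmt14_general {S : Type*}
    (F : (ℕ → NNReal) → NNReal)
    (hmono : ∀ a b : ℕ → NNReal, (∀ i, a i ≤ b i) → F a ≤ F b)
    (hsubadd : ∀ a b : ℕ → NNReal, F (a + b) ≤ F a + F b)
    (hzero : ∀ a : ℕ → NNReal, F a = 0 ↔ a = 0)
    (dI : ℕ → S → S → NNReal)
    (d : S → S → NNReal) (hd : ∀ x y, d x y = F fun i => dI i x y)
    -- (a) `F(Σ_{i<j} vᵢ eᵢ) → 0` as `v → 0`, for each `j`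
    (ha : ∀ j : ℕ, ∀ ε : NNReal, 0 < ε → ∃ δ : NNReal, 0 < δ ∧
      ∀ v : ℕ → NNReal, (∀ i, v i ≤ δ) → F (fun i => if i < j then v i else 0) < ε)
    -- (b) `sup_{x,y} F(Σ_{i≥j} dᵢ(x,y) eᵢ) → 0` as `j → ∞`
    (hb : ∀ ε : NNReal, 0 < ε → ∃ j₀ : ℕ, ∀ j ≥ j₀, ∀ x y : S,
      F (fun i => if j ≤ i then dI i x y else 0) < ε) :
    -- convergence to a point `x` w.r.t. `d` iff convergence w.r.t. every `dᵢ`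
    (∀ (u : ℕ → S) (x : S),
      Tendsto (fun n => d (u n) x) atTop (nhds 0) ↔
        ∀ i, Tendsto (fun n => dI i (u n) x) atTop (nhds 0)) ∧
    -- Cauchy w.r.t. `d` iff Cauchy w.r.t. every `dᵢ`
    (∀ u : ℕ → S,
      (∀ ε : NNReal, 0 < ε → ∃ N : ℕ, ∀ m ≥ N, ∀ n ≥ N, d (u m) (u n) < ε) ↔
        ∀ i, ∀ ε : NNReal, 0 < ε → ∃ N : ℕ, ∀ m ≥ N, ∀ n ≥ N, dI i (u m) (u n) < ε) := by
  have hmono' : Monotone F := fun a b => hmono a b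
  have htail : ∀ ε : NNReal, 0 < ε → ∃ j, ∀ x y : S,
      F (fun i => if j ≤ i then dI i x y else 0) < ε :=
    fun ε hε => (hb ε hε).imp fun j hj => hj j le_rfl
  refine ⟨fun u x => ?_, fun u => ?_⟩
  · simp only [hd]
    exact tendsto_nhds_zero_iff_forall_tendsto_apply hmono' hsubadd hzero ha _ fun ε hε => (htail ε hε).imp fun j hj => .of_forall fun n => hj (u n) x
  · simp only [NNReal.cauchy_condition_iff_tendsto, hd]
    exact tendsto_nhds_zero_iff_forall_tendsto_apply hmono' hsubadd hzero ha _ fun ε hε => (htail ε hε).imp fun j hj => .of_forall fun p => hj (u p.1) (u p.2)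

/-- Under the conditions (a) and (b) on the functional `F`, convergence (to a given
point) and Cauchyness with respect to the functional metric `d = F ∘ d₀` are
equivalent to the corresponding properties with respect to every `dᵢ`. -/
theorem stmt14 {S : Type*} [Nonempty S]
    (F : (ℕ → NNReal) → NNReal)
    (hmono : ∀ a b : ℕ → NNReal, (∀ i, a i ≤ b i) → F a ≤ F b)
    (hsubadd : ∀ a b : ℕ → NNReal, F (a + b) ≤ F a + F b)
    (hzero : ∀ a : ℕ → NNReal, F a = 0 ↔ a = 0)
    (dI : ℕ → S → S → NNReal)
    (hrefl : ∀ i x, dI i x x = 0)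
    (hsymm : ∀ i x y, dI i x y = dI i y x)
    (htri : ∀ i x y z, dI i x z ≤ dI i x y + dI i y z)
    (d : S → S → NNReal) (hd : ∀ x y, d x y = F fun i => dI i x y)
    -- (a) `F(Σ_{i<j} vᵢ eᵢ) → 0` as `v → 0`, for each `j`
    (ha : ∀ j : ℕ, ∀ ε : NNReal, 0 < ε → ∃ δ : NNReal, 0 < δ ∧
      ∀ v : ℕ → NNReal, (∀ i, v i ≤ δ) → F (fun i => if i < j then v i else 0) < ε)
    -- (b) `sup_{x,y} F(Σ_{i≥j} dᵢ(x,y) eᵢ) → 0` as `j → ∞`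
    (hb : ∀ ε : NNReal, 0 < ε → ∃ j₀ : ℕ, ∀ j ≥ j₀, ∀ x y : S,
      F (fun i => if j ≤ i then dI i x y else 0) < ε) :
    -- convergence to a point `x` w.r.t. `d` iff convergence w.r.t. every `dᵢ`
    (∀ (u : ℕ → S) (x : S),
      Tendsto (fun n => d (u n) x) atTop (nhds 0) ↔
        ∀ i, Tendsto (fun n => dI i (u n) x) atTop (nhds 0)) ∧
    -- Cauchy w.r.t. `d` iff Cauchy w.r.t. every `dᵢ`
    (∀ u : ℕ → S,
      (∀ ε : NNReal, 0 < ε → ∃ N : ℕ, ∀ m ≥ N, ∀ n ≥ N, d (u m) (u n) < ε) ↔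
        ∀ i, ∀ ε : NNReal, 0 < ε → ∃ N : ℕ, ∀ m ≥ N, ∀ n ≥ N, dI i (u m) (u n) < ε) :=
  stmt14_general F hmono hsubadd hzero dI d hd ha hb
end

section
/- Let F : ℓ₊ → ℝ₊ be given by F(a) = Σ_{n=1}^∞ f_n(a_n), where each f_n : ℝ₊ → ℝ₊ is increasing, subadditive, continuous at 0, and vanishes only at 0, and suppose f_n ≤ b_n for all n for some summable sequence (b_n) of nonnegative reals. Then F is well-defined (the series converges for all a ∈ ℓ₊), increasing, subadditive, vanishes only at the zero sequence, and satisfies lim_{v→0} F(Σ_{i=1}^j v_i e_i) = 0 for every j and lim_{j→∞} sup_{a∈ℓ₊} F(Σ_{i=j}^∞ a_i e_i) = 0. -/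
/-!
Domination by the summable sequence `b` makes every series `∑ fₙ(aₙ)` converge and bounds the
tails uniformly: `∑_{n ≥ j} fₙ(aₙ) ≤ ∑_{n ≥ j} bₙ → 0`. Monotonicity, subadditivity and
definiteness pass termwise from the `fₙ` to the sum, and a sequence supported on `{0, …, j-1}`
only involves finitely many terms, each continuous at `0`.
-/

open Filter Topology Finset NNReal

section

variable {f : ℕ → ℝ≥0 → ℝ≥0} {b : ℕ → ℝ≥0}

theorem summable_apply_of_le (hb : ∀ n x, f n x ≤ b n) (hbsum : Summable b) (a : ℕ → ℝ≥0) :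
    Summable fun n => f n (a n) :=
  NNReal.summable_of_le (fun n => hb n (a n)) hbsum

theorem tsum_apply_mono (hmono : ∀ n, Monotone (f n))
    (hsum : ∀ a : ℕ → ℝ≥0, Summable fun n => f n (a n)) {a c : ℕ → ℝ≥0} (h : ∀ i, a i ≤ c i) :
    ∑' n, f n (a n) ≤ ∑' n, f n (c n) :=
  (hsum a).tsum_le_tsum (fun n => hmono n (h n)) (hsum c)

theorem tsum_apply_add_le (hsubadd : ∀ n x y, f n (x + y) ≤ f n x + f n y)
    (hsum : ∀ a : ℕ → ℝ≥0, Summable fun n => f n (a n)) (a c : ℕ → ℝ≥0) :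
    ∑' n, f n ((a + c) n) ≤ ∑' n, f n (a n) + ∑' n, f n (c n) :=
  calc ∑' n, f n ((a + c) n) ≤ ∑' n, (f n (a n) + f n (c n)) :=
        (hsum _).tsum_le_tsum (fun n => hsubadd n (a n) (c n)) ((hsum a).add (hsum c))
    _ = ∑' n, f n (a n) + ∑' n, f n (c n) := (hsum a).tsum_add (hsum c)

theorem tsum_apply_eq_zero_iff (hzero : ∀ n x, f n x = 0 ↔ x = 0)
    (hsum : ∀ a : ℕ → ℝ≥0, Summable fun n => f n (a n)) (a : ℕ → ℝ≥0) :
    ∑' n, f n (a n) = 0 ↔ a = 0 := by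
  simp only [(hsum a).tsum_eq_zero_iff, hzero, funext_iff, Pi.zero_apply]

theorem exists_pos_sum_range_apply_lt (hcont : ∀ n, ContinuousAt (f n) 0)
    (hf0 : ∀ n, f n 0 = 0) (j : ℕ) {ε : ℝ≥0} (hε : 0 < ε) :
    ∃ δ > 0, ∑ n ∈ range j, f n δ < ε := by
  have hlim : Tendsto (fun x => ∑ n ∈ range j, f n x) (𝓝 0) (𝓝 0) := by
    simpa [hf0] using tendsto_finsetSum (range j) fun n _ => (hcont n).tendsto
  have hsmall : ∀ᶠ x in 𝓝[>] 0, ∑ n ∈ range j, f n x < ε :=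
    nhdsWithin_le_nhds (hlim.eventually (gt_mem_nhds hε))
  obtain ⟨δ, hδ, hδpos⟩ := (hsmall.and self_mem_nhdsWithin).exists
  exact ⟨δ, hδpos, hδ⟩

theorem tsum_apply_truncate_le (hmono : ∀ n, Monotone (f n)) (hf0 : ∀ n, f n 0 = 0)
    {j : ℕ} {δ : ℝ≥0} {v : ℕ → ℝ≥0} (hv : ∀ i, v i ≤ δ) :
    ∑' n, f n (if n < j then v n else 0) ≤ ∑ n ∈ range j, f n δ := by
  rw [tsum_eq_sum (s := range j) fun n hn => by
    rw [if_neg (by simpa using hn), hf0]]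
  refine sum_le_sum fun n hn => ?_
  rw [if_pos (mem_range.mp hn)]
  exact hmono n (hv n)

theorem tsum_apply_tail_le (hb : ∀ n x, f n x ≤ b n) (hbsum : Summable b) (hf0 : ∀ n, f n 0 = 0)
    (j : ℕ) (a : ℕ → ℝ≥0) :
    ∑' n, f n (if j ≤ n then a n else 0) ≤ ∑' k, b (k + j) := by
  have hhead : ∑ n ∈ range j, f n (if j ≤ n then a n else 0) = 0 :=
    sum_eq_zero fun n hn => by rw [if_neg (by simpa using hn), hf0]
  rw [NNReal.sum_add_tsum_nat_add j (summable_apply_of_le hb hbsum _), hhead, zero_add]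
  have hshifted : Summable fun k => f (k + j) (if j ≤ k + j then a (k + j) else 0) :=
    NNReal.summable_nat_add _ (summable_apply_of_le hb hbsum fun n => if j ≤ n then a n else 0) j
  exact hshifted.tsum_le_tsum (fun k => hb _ _) (NNReal.summable_nat_add b hbsum j)

end

/-- If `F(a) = Σ_n f_n(a_n)` with each `f_n : ℝ₊ → ℝ₊` increasing, subadditive,
continuous at `0`, vanishing only at `0`, and dominated by a summable sequence
`(b_n)`, then `F` is well defined, increasing, subadditive, vanishes only at the
zero sequence, and satisfies the two limit conditions of the functional metric
construction. -/
theorem stmt15 (f : ℕ → NNReal → NNReal)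
    (hmono : ∀ n, Monotone (f n))
    (hsubadd : ∀ n x y, f n (x + y) ≤ f n x + f n y)
    (hcont : ∀ n, ContinuousAt (f n) 0)
    (hzero : ∀ n x, f n x = 0 ↔ x = 0)
    (b : ℕ → NNReal) (hb : ∀ n x, f n x ≤ b n) (hbsum : Summable b)
    (F : (ℕ → NNReal) → NNReal) (hF : ∀ a : ℕ → NNReal, F a = ∑' n, f n (a n)) :
    -- well-definedness: the series converges for every `a ∈ ℓ₊`
    (∀ a : ℕ → NNReal, Summable fun n => f n (a n)) ∧
    -- `F` is increasing
    (∀ a c : ℕ → NNReal, (∀ i, a i ≤ c i) → F a ≤ F c) ∧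
    -- `F` is subadditive
    (∀ a c : ℕ → NNReal, F (a + c) ≤ F a + F c) ∧
    -- `F` vanishes only at the zero sequence
    (∀ a : ℕ → NNReal, F a = 0 ↔ a = 0) ∧
    -- `lim_{v → 0} F(Σ_{i<j} vᵢ eᵢ) = 0` for every `j`
    (∀ j : ℕ, ∀ ε : NNReal, 0 < ε → ∃ δ : NNReal, 0 < δ ∧
      ∀ v : ℕ → NNReal, (∀ i, v i ≤ δ) → F (fun i => if i < j then v i else 0) < ε) ∧
    -- `lim_{j → ∞} sup_{a ∈ ℓ₊} F(Σ_{i≥j} aᵢ eᵢ) = 0`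
    (∀ ε : NNReal, 0 < ε → ∃ j₀ : ℕ, ∀ j ≥ j₀, ∀ a : ℕ → NNReal,
      F (fun i => if j ≤ i then a i else 0) < ε) := by
  have hf0 : ∀ n, f n 0 = 0 := fun n => (hzero n 0).mpr rfl
  have hsum := summable_apply_of_le hb hbsum
  simp only [hF]
  refine ⟨hsum, fun a c => tsum_apply_mono hmono hsum, tsum_apply_add_le hsubadd hsum,
    tsum_apply_eq_zero_iff hzero hsum, ?_, ?_⟩
  · intro j ε hε
    obtain ⟨δ, hδ, hsmall⟩ := exists_pos_sum_range_apply_lt hcont hf0 j hε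
    exact ⟨δ, hδ, fun v hv => (tsum_apply_truncate_le hmono hf0 hv).trans_lt hsmall⟩
  · intro ε hε
    obtain ⟨j₀, hj₀⟩ :=
      eventually_atTop.mp ((NNReal.tendsto_sum_nat_add b).eventually_lt_const hε)
    exact ⟨j₀, fun j hj a => (tsum_apply_tail_le hb hbsum hf0 j a).trans_lt (hj₀ j hj)⟩
end

section
/- Let E be a normed real vector space with E ≠ {0}, q ∈ (1,2], and suppose there exist a norm ‖·‖ equivalent to the given norm and a constant ĉ ≥ 2 such that ‖x+y‖^q + ‖x−y‖^q ≤ 2‖x‖^q + ĉ‖y‖^q for all x, y ∈ E. Then the modulus of smoothness ρ(t) := sup{ (‖x+ty‖ + ‖x−ty‖)/2 − 1 : ‖x‖ = ‖y‖ = 1 } satisfies ρ(t) ≤ (ĉ/2) t^q for all t ≥ 0. -/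
/-! With `a = N(x + t y)`, `b = N(x - t y)`, the smoothness inequality applied to `x` and `t y`
gives `a^q + b^q ≤ 2 + ĉ t^q`. Convexity of `s ↦ s^q` bounds `m^q`, `m = (a+b)/2`, by the mean
of `a^q` and `b^q`, and `m ≤ max 1 (m^q)` turns this into the bound on `m - 1`. -/

lemma rpow_add_div_two_le {q a b : ℝ} (hq : 1 ≤ q) (ha : 0 ≤ a) (hb : 0 ≤ b) :
    ((a + b) / 2) ^ q ≤ (a ^ q + b ^ q) / 2 := by
  have h := (convexOn_rpow hq).2 (Set.mem_Ici.2 ha) (Set.mem_Ici.2 hb)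
    (by norm_num : (0 : ℝ) ≤ 1 / 2) (by norm_num : (0 : ℝ) ≤ 1 / 2) (by norm_num)
  simp only [smul_eq_mul] at h
  calc ((a + b) / 2) ^ q = (1 / 2 * a + 1 / 2 * b) ^ q := by ring_nf
    _ ≤ 1 / 2 * a ^ q + 1 / 2 * b ^ q := h
    _ = (a ^ q + b ^ q) / 2 := by ring

lemma add_div_two_sub_one_le_of_rpow_add_rpow_le {q a b s : ℝ} (hq : 1 ≤ q) (ha : 0 ≤ a)
    (hb : 0 ≤ b) (hs : 0 ≤ s) (h : a ^ q + b ^ q ≤ 2 + s) :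
    (a + b) / 2 - 1 ≤ s / 2 := by
  rcases le_or_gt ((a + b) / 2) 1 with hm | hm
  · linarith
  · have hmean := rpow_add_div_two_le hq ha hb
    have hself := Real.self_le_rpow_of_one_le hm.le hq
    linarith

theorem stmt16_general {E : Type*} [NormedAddCommGroup E] [NormedSpace ℝ E]
    (q : ℝ) (hq1 : 1 < q)
    (N : E → ℝ) (c' : ℝ) (hc' : 2 ≤ c')
    (hNsmul : ∀ (a : ℝ) (x : E), N (a • x) = |a| * N x)
    (hNadd : ∀ x y : E, N (x + y) ≤ N x + N y)
    -- the `q`-smoothness inequality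
    (hsmooth : ∀ x y : E, N (x + y) ^ q + N (x - y) ^ q ≤ 2 * N x ^ q + c' * N y ^ q)
    (t : ℝ) (ht : 0 ≤ t) (x y : E) (hx : N x = 1) (hy : N y = 1) :
    (N (x + t • y) + N (x - t • y)) / 2 - 1 ≤ (c' / 2) * t ^ q := by
  have hN_nonneg : ∀ z, 0 ≤ N z :=
    apply_nonneg (Seminorm.of N hNadd fun a z => by simpa using hNsmul a z : Seminorm ℝ E)
  have hsmooth_ty : N (x + t • y) ^ q + N (x - t • y) ^ q ≤ 2 + c' * t ^ q := by
    simpa [hNsmul, hx, hy, abs_of_nonneg ht] using hsmooth x (t • y)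
  have hs : 0 ≤ c' * t ^ q := mul_nonneg (by linarith) (Real.rpow_nonneg ht q)
  calc (N (x + t • y) + N (x - t • y)) / 2 - 1 ≤ c' * t ^ q / 2 :=
        add_div_two_sub_one_le_of_rpow_add_rpow_le hq1.le (hN_nonneg _) (hN_nonneg _) hs
          hsmooth_ty
    _ = (c' / 2) * t ^ q := by ring

/-- If a norm `N` equivalent to the norm of a nontrivial normed space satisfies the
`q`-smoothness inequality `N(x+y)^q + N(x−y)^q ≤ 2 N(x)^q + ĉ N(y)^q` for some
`ĉ ≥ 2` and `q ∈ (1,2]`, then its modulus of smoothness satisfies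
`ρ(t) ≤ (ĉ/2) t^q` for all `t ≥ 0` (stated pointwise over unit vectors). -/
theorem stmt16 {E : Type*} [NormedAddCommGroup E] [NormedSpace ℝ E] [Nontrivial E]
    (q : ℝ) (hq1 : 1 < q) (hq2 : q ≤ 2)
    (N : E → ℝ) (c' : ℝ) (hc' : 2 ≤ c')
    (hN0 : ∀ x : E, N x = 0 ↔ x = 0)
    (hNsmul : ∀ (a : ℝ) (x : E), N (a • x) = |a| * N x)
    (hNadd : ∀ x y : E, N (x + y) ≤ N x + N y)
    -- `N` is equivalent to the underlying norm
    (hequiv : ∃ c C : ℝ, 0 < c ∧ 0 < C ∧ ∀ x : E, c * ‖x‖ ≤ N x ∧ N x ≤ C * ‖x‖)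
    -- the `q`-smoothness inequality
    (hsmooth : ∀ x y : E, N (x + y) ^ q + N (x - y) ^ q ≤ 2 * N x ^ q + c' * N y ^ q)
    (t : ℝ) (ht : 0 ≤ t) (x y : E) (hx : N x = 1) (hy : N y = 1) :
    (N (x + t • y) + N (x - t • y)) / 2 - 1 ≤ (c' / 2) * t ^ q :=
  stmt16_general q hq1 N c' hc' hNsmul hNadd hsmooth t ht x y hx hy
end

section
/- Let I be an interval in ℝ₊ with 0 ∈ I, q ≥ 1, and f : I → [0,∞] measurable. Define the convolution kernel k(t,s) := f(t−s) for s < t in I. Then: if f is locally q-fold integrable (∫₀^T f(u)^q du < ∞ for all T ∈ I), then for every T ∈ I, lim_{δ↓0} sup_{r,t∈[0,T], r≤t≤r+δ} ∫_r^t k(t,s)^q ds = 0 and sup_{t∈[0,T]} ∫₀^t k(t,s)^q ds < ∞; conversely, if ∫₀^T f(u)^q du = ∞ for some T ∈ I, then ess sup_{t∈[0,T]} ∫₀^t k(t,s)^q ds = ∞. -/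
/-!
Substituting `u = t - s` turns `∫_r^t k(t,s)^q ds` into `G (t - r)`, where `G x = ∫_0^x f^q`.
The window condition is then the absolute continuity of the integral of `f^q` on `[0,T]`, and
`G T` bounds the supremum. Conversely `G` is monotone, so its essential supremum over `[0,T]`
dominates `G c` for every `c < T`, and these exhaust `∫_{[0,T)} f^q = ∫_{[0,T]} f^q`.
-/

open MeasureTheory ENNReal Set Filter Topology

theorem setLIntegral_Icc_comp_sub_left (g : ℝ → ℝ≥0∞) (r t : ℝ) :
    ∫⁻ s in Icc r t, g (t - s) = ∫⁻ u in Icc 0 (t - r), g u := by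
  have hpre : (fun s : ℝ => t - s) ⁻¹' Icc 0 (t - r) = Icc r t := by
    ext s
    simp
  rw [← hpre]
  exact (Measure.measurePreserving_sub_left volume t).setLIntegral_comp_preimage_emb
    (MeasurableEquiv.subLeft t).measurableEmbedding g _

theorem tendsto_setLIntegral_Icc_zero_nhdsGT (g : ℝ → ℝ≥0∞) {T : ℝ}
    (hg : ∫⁻ u in Icc 0 T, g u ≠ ∞) :
    Tendsto (fun δ => ∫⁻ u in Icc 0 δ ∩ Icc 0 T, g u) (𝓝[>] 0) (𝓝 0) := by
  have hvol : Tendsto (fun δ : ℝ => volume (Icc 0 δ)) (𝓝[>] 0) (𝓝 0) := by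
    simpa only [Real.volume_Icc, sub_zero, ENNReal.ofReal_zero, id] using
      (ENNReal.tendsto_ofReal (tendsto_id (x := 𝓝 (0:ℝ)))).mono_left nhdsWithin_le_nhds
  have hvolT : Tendsto (fun δ : ℝ => volume.restrict (Icc 0 T) (Icc 0 δ)) (𝓝[>] 0) (𝓝 0) :=
    tendsto_of_tendsto_of_tendsto_of_le_of_le tendsto_const_nhds hvol (fun _ => zero_le)
      fun _ => Measure.restrict_le_self _
  simpa only [Measure.restrict_restrict measurableSet_Icc] using
    tendsto_setLIntegral_zero hg hvolT

theorem iInf_iSup_setLIntegral_Icc_sub_eq_zero (g : ℝ → ℝ≥0∞) {T : ℝ}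
    (hg : ∫⁻ u in Icc 0 T, g u ≠ ∞) :
    ⨅ δ ∈ Ioi (0:ℝ), ⨆ r ∈ Icc (0:ℝ) T, ⨆ t ∈ Icc (0:ℝ) T,
      ⨆ _ : r ≤ t ∧ t ≤ r + δ, ∫⁻ u in Icc 0 (t - r), g u = 0 := by
  refine le_antisymm (ge_of_tendsto (tendsto_setLIntegral_Icc_zero_nhdsGT g hg)
    (eventually_nhdsWithin_of_forall fun δ hδ => ?_)) zero_le
  refine iInf₂_le_of_le δ hδ (iSup₂_le fun r hr => iSup₂_le fun t ht => iSup_le fun hrt => ?_)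
  refine lintegral_mono_set (subset_inter (Icc_subset_Icc_right ?_) (Icc_subset_Icc_right ?_))
  · linarith [hrt.2]
  · linarith [ht.2, hr.1]

theorem iSup_setLIntegral_Icc_eq_setLIntegral_Ico (g : ℝ → ℝ≥0∞) (a b : ℝ) :
    ⨆ c ∈ Ico a b, ∫⁻ u in Icc a c, g u = ∫⁻ u in Ico a b, g u := by
  refine le_antisymm (iSup₂_le fun c hc => lintegral_mono_set (Icc_subset_Ico_right hc.2)) ?_
  -- rational cut-offs make the exhausting family countable
  let C := {c : ℚ // (c : ℝ) ∈ Ico a b}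
  have hunion : Ico a b = ⋃ c : C, Icc a (c : ℝ) := by
    refine Subset.antisymm (fun x hx => ?_) (iUnion_subset fun c => Icc_subset_Ico_right c.2.2)
    obtain ⟨c, hxc, hcb⟩ := exists_rat_btwn hx.2
    exact mem_iUnion.2 ⟨⟨c, hx.1.trans hxc.le, hcb⟩, hx.1, hxc.le⟩
  have hdir : Directed (· ⊆ ·) fun c : C => Icc a (c : ℝ) :=
    Monotone.directed_le fun c d hcd => Icc_subset_Icc_right (Rat.cast_le.2 hcd)
  conv_lhs => rw [hunion, setLIntegral_iUnion_of_directed g hdir]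
  exact iSup_le fun c => le_iSup₂_of_le (c : ℝ) c.2 le_rfl

theorem Monotone.le_essSup_restrict_Icc {β : Type*} [CompleteLattice β] {h : ℝ → β}
    (hh : Monotone h) {a b c : ℝ} (hac : a ≤ c) (hcb : c < b) :
    h c ≤ essSup h (volume.restrict (Icc a b)) := by
  have hpos : volume.restrict (Icc c b) ≠ 0 := by
    simp [Measure.restrict_eq_zero, hcb]
  calc h c = essSup (fun _ => h c) (volume.restrict (Icc c b)) := (essSup_const _ hpos).symm
    _ ≤ essSup h (volume.restrict (Icc c b)) :=
        essSup_mono_ae ((ae_restrict_mem measurableSet_Icc).mono fun t ht => hh ht.1)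
    _ ≤ essSup h (volume.restrict (Icc a b)) :=
        essSup_mono_measure' (Measure.restrict_mono (Icc_subset_Icc_left hac) le_rfl)

theorem stmt18_general (I : Set ℝ) (q : ℝ) (f : ℝ → ℝ≥0∞) :
    ((∀ T ∈ I, (∫⁻ u in Icc (0:ℝ) T, f u ^ q) ≠ ∞) →
      ∀ T ∈ I,
        (⨅ δ ∈ Ioi (0:ℝ), ⨆ r ∈ Icc (0:ℝ) T, ⨆ t ∈ Icc (0:ℝ) T,
          ⨆ _ : r ≤ t ∧ t ≤ r + δ, ∫⁻ s in Icc r t, f (t - s) ^ q) = 0 ∧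
        (⨆ t ∈ Icc (0:ℝ) T, ∫⁻ s in Icc (0:ℝ) t, f (t - s) ^ q) ≠ ∞) ∧
    (∀ T ∈ I, (∫⁻ u in Icc (0:ℝ) T, f u ^ q) = ∞ →
      essSup (fun t => ∫⁻ s in Icc (0:ℝ) t, f (t - s) ^ q)
        (volume.restrict (Icc (0:ℝ) T)) = ∞) := by
  simp only [setLIntegral_Icc_comp_sub_left (fun u => f u ^ q), sub_zero]
  have hmono : Monotone fun t => ∫⁻ u in Icc 0 t, f u ^ q :=
    fun s t hst => lintegral_mono_set (Icc_subset_Icc_right hst)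
  refine ⟨fun hloc T hT => ⟨iInf_iSup_setLIntegral_Icc_sub_eq_zero _ (hloc T hT), ?_⟩,
    fun T _ hinf => ?_⟩
  · exact ne_top_of_le_ne_top (hloc T hT) (iSup₂_le fun t ht => hmono ht.2)
  · rw [setLIntegral_congr Ico_ae_eq_Icc.symm,
      ← iSup_setLIntegral_Icc_eq_setLIntegral_Ico] at hinf
    exact top_le_iff.1 (hinf ▸ iSup₂_le fun c hc => hmono.le_essSup_restrict_Icc hc.1 hc.2)

/-- Convolution kernels: if `f` is locally `q`-fold integrable then the kernel
`k(t,s) = f(t-s)` satisfies the small-window vanishing condition and the uniform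
boundedness condition on every `[0,T]`; conversely, if `∫₀^T f(u)^q du = ∞` then
the essential supremum of `t ↦ ∫₀^t k(t,s)^q ds` over `[0,T]` is infinite. -/
theorem stmt18 (I : Set ℝ) (hI : I.OrdConnected) (hI0 : (0:ℝ) ∈ I)
    (hIpos : I ⊆ Ici (0:ℝ))
    (q : ℝ) (hq : 1 ≤ q) (f : ℝ → ℝ≥0∞) (hf : Measurable f) :
    ((∀ T ∈ I, (∫⁻ u in Icc (0:ℝ) T, f u ^ q) ≠ ∞) →
      ∀ T ∈ I,
        (⨅ δ ∈ Ioi (0:ℝ), ⨆ r ∈ Icc (0:ℝ) T, ⨆ t ∈ Icc (0:ℝ) T,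
          ⨆ _ : r ≤ t ∧ t ≤ r + δ, ∫⁻ s in Icc r t, f (t - s) ^ q) = 0 ∧
        (⨆ t ∈ Icc (0:ℝ) T, ∫⁻ s in Icc (0:ℝ) t, f (t - s) ^ q) ≠ ∞) ∧
    (∀ T ∈ I, (∫⁻ u in Icc (0:ℝ) T, f u ^ q) = ∞ →
      essSup (fun t => ∫⁻ s in Icc (0:ℝ) t, f (t - s) ^ q)
        (volume.restrict (Icc (0:ℝ) T)) = ∞) :=
  stmt18_general I q f
end
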